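/- arXiv:2407.09314 — 5 statements merged into one kernel-verified Lean document; each statement's English description precedes it below -/
import Mathlib

section
/- Assume the standing assumptions (a), (e) and (f). Then 𝓛_δ is Fréchet differentiable at h from the strong to the weak norm, with differential d𝓛_{δ,h} = L_{δ,h} + ∂L_{δ,h}: namely, lim over g ∈ V_s with ‖g‖_s → 0 of ‖𝓛_δ(h+g) − 𝓛_δ(h) − d𝓛_{δ,h}(g)‖_w / ‖g‖_s equals 0. Moreover, if (b) also holds with constant C, then d𝓛_{δ,h} : V_s → V_s is a bounded operator with ‖d𝓛_{δ,h}‖_{s→s} ≤ δ C₀ ‖h‖_ss + C. -/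
/-!
Split `𝓛(h+g) - 𝓛(h) - (L_h + ∂L_h) g` as `[L_{h+g} h - L_h h - ∂L_h g] + [L_{h+g} g - L_h g]`.
The first bracket is `o(‖g‖_w)` in the strong norm by (f), the second is `O(‖g‖_s ‖g‖_w)` in
the weak norm by (e), so both are `o(‖g‖_s)` in the weak norm. For the operator bound, (e) gives
`‖L_{h+g} h - L_h h‖_s ≤ δ C₀ ‖h‖_ss ‖g‖_w`; since `∂L_h` is linear and is the first-order part of
`g ↦ L_{h+g} h - L_h h`, rescaling `g` transfers this bound to `∂L_h g`.
-/

section LittleO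

variable {V W : Type*} [AddCommGroup V] [Module ℝ V] [AddCommGroup W] [Module ℝ W]

def IsLittleOOn (p : Seminorm ℝ V) (q : Seminorm ℝ W) (S : Set V) (R : V → W) : Prop :=
  ∀ ε > (0 : ℝ), ∃ r > (0 : ℝ), ∀ g ∈ S, p g ≤ r → q (R g) ≤ ε * p g

namespace IsLittleOOn

variable {p p' : Seminorm ℝ V} {q q' : Seminorm ℝ W} {S S' : Set V} {R R₁ R₂ : V → W}

theorem mono (hR : IsLittleOOn p q S R) (hS : S' ⊆ S) (hp : ∀ g ∈ S', p g ≤ p' g)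
    (hq : ∀ g ∈ S', q' (R g) ≤ q (R g)) : IsLittleOOn p' q' S' R := by
  intro ε hε
  obtain ⟨r, hr, hR⟩ := hR ε hε
  refine ⟨r, hr, fun g hg hpr => ?_⟩
  calc q' (R g) ≤ q (R g) := hq g hg
    _ ≤ ε * p g := hR g (hS hg) ((hp g hg).trans hpr)
    _ ≤ ε * p' g := by gcongr; exact hp g hg

theorem add (h₁ : IsLittleOOn p q S R₁) (h₂ : IsLittleOOn p q S R₂) :
    IsLittleOOn p q S (R₁ + R₂) := by
  intro ε hε
  obtain ⟨r₁, hr₁, h₁⟩ := h₁ (ε / 2) (half_pos hε)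
  obtain ⟨r₂, hr₂, h₂⟩ := h₂ (ε / 2) (half_pos hε)
  refine ⟨min r₁ r₂, lt_min hr₁ hr₂, fun g hg hpr => ?_⟩
  calc q ((R₁ + R₂) g) ≤ q (R₁ g) + q (R₂ g) := map_add_le_add q _ _
    _ ≤ ε / 2 * p g + ε / 2 * p g :=
      add_le_add (h₁ g hg (hpr.trans (min_le_left _ _))) (h₂ g hg (hpr.trans (min_le_right _ _)))
    _ = ε * p g := by ring

theorem of_le_mul_mul {K : ℝ} (hK : 0 ≤ K) (hR : ∀ g ∈ S, q (R g) ≤ K * p g * p g) :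
    IsLittleOOn p q S R := by
  intro ε hε
  refine ⟨ε / (K + 1), by positivity, fun g hg hpr => ?_⟩
  have hKr : K * (ε / (K + 1)) ≤ ε := by
    rw [mul_div_assoc', div_le_iff₀ (by positivity)]
    nlinarith
  calc q (R g) ≤ K * p g * p g := hR g hg
    _ ≤ K * (ε / (K + 1)) * p g := by gcongr
    _ ≤ ε * p g := by gcongr

end IsLittleOOn

theorem IsLittleOOn.le_mul_of_sub {p : Seminorm ℝ V} {q : Seminorm ℝ W} {M : Submodule ℝ V}
    {φ : V → W} {T : V →ₗ[ℝ] W} {K : ℝ} (hφ : ∀ g ∈ M, q (φ g) ≤ K * p g)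
    (hT : IsLittleOOn p q M (fun g => φ g - T g)) {g : V} (hg : g ∈ M) :
    q (T g) ≤ K * p g := by
  refine le_of_forall_pos_le_add fun ε hε => ?_
  have hpg : 0 ≤ p g := apply_nonneg p g
  obtain ⟨r, hr, hT⟩ := hT (ε / (p g + 1)) (by positivity)
  set t := r / (p g + 1) with ht
  have htpos : 0 < t := by positivity
  have hpt : p (t • g) = t * p g := by rw [map_smul_eq_mul, Real.norm_of_nonneg htpos.le]
  have htr : t * p g ≤ r := by
    rw [ht, div_mul_eq_mul_div, div_le_iff₀ (by positivity)]
    nlinarith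
  have hε' : ε / (p g + 1) * p g ≤ ε := by
    rw [div_mul_eq_mul_div, div_le_iff₀ (by positivity)]
    nlinarith
  have hscaled : t * q (T g) ≤ t * (K * p g + ε / (p g + 1) * p g) := by
    calc t * q (T g) = q (T (t • g)) := by
          rw [map_smul, map_smul_eq_mul, Real.norm_of_nonneg htpos.le]
      _ ≤ q (φ (t • g)) + q (φ (t • g) - T (t • g)) := by
          simpa using map_sub_le_add q (φ (t • g)) (φ (t • g) - T (t • g))
      _ ≤ K * p (t • g) + ε / (p g + 1) * p (t • g) :=
          add_le_add (hφ _ (M.smul_mem t hg)) (hT _ (M.smul_mem t hg) (hpt ▸ htr))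
      _ = t * (K * p g + ε / (p g + 1) * p g) := by rw [hpt]; ring
  linarith [le_of_mul_le_mul_left hscaled htpos]

end LittleO

theorem frechet_differential_of_STO_general
    {V : Type*} [AddCommGroup V] [Module ℝ V]
    -- the three norms (weak, strong, strongest); the ambient space is `B_w = V`
    (nw ns nss : Seminorm ℝ V)
    -- the subspaces `B_s` and `B_ss`
    (Bs Bss : Submodule ℝ V)
    (hBssBs : Bss ≤ Bs)
    (hwle : ∀ x ∈ Bs, nw x ≤ ns x)
    -- total-mass functional `μ ↦ μ(X)`
    (mass : V →ₗ[ℝ] ℝ)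
    -- coupling strength
    (δ : ℝ) (hδ : 0 ≤ δ)
    -- the family of Markov bounded operators `f ↦ L_{δ,f}`, preserving `B_s` and `B_ss`
    (L : V → Module.End ℝ V)
    (hMarkov : ∀ f x, mass (L f x) = mass x)
    (hpres_s : ∀ f, ∀ x ∈ Bs, L f x ∈ Bs)
    -- (a) fixed point: `𝓛_δ h = L_{δ,h} h = h` with `h ∈ B_ss`
    (h : V) (hh : h ∈ Bss)
    -- (b) boundedness in the three operator norms, with constant `C`
    (C : ℝ)
    (hb_s : ∀ f, ∀ x ∈ Bs, ns (L f x) ≤ C * ns x)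
    -- (e) regularity of the family of operators
    (C₀ : ℝ) (hC₀ : 0 < C₀)
    (he₁ : ∀ f ∈ Bs, ∀ g ∈ Bs, ns (L f h - L g h) ≤ δ * C₀ * nss h * nw (f - g))
    (C₁ : ℝ) (hC₁ : 0 < C₁)
    (he₂ : ∀ f₁ f₂ : V, ∀ g ∈ Bs, nw (L f₁ g - L f₂ g) ≤ δ * C₁ * ns g * nw (f₁ - f₂))
    -- (f) differentiability of the family at `h`: a bounded linear `∂L_{δ,h} : V_w → V_s`
    (dL : Module.End ℝ V)
    (hdL_maps : ∀ g : V, mass g = 0 → dL g ∈ Bs ∧ mass (dL g) = 0)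
    (hf : ∀ ε > (0:ℝ), ∃ r > (0:ℝ), ∀ g : V, mass g = 0 → nw g ≤ r →
      ns (L (h + g) h - L h h - dL g) ≤ ε * nw g) :
    -- conclusion 1: Fréchet differentiability of `𝓛_δ` at `h` (strong → weak), with
    -- differential `d𝓛_{δ,h} = L_{δ,h} + ∂L_{δ,h}`
    (∀ ε > (0:ℝ), ∃ r > (0:ℝ), ∀ g ∈ Bs, mass g = 0 → ns g ≤ r →
      nw (L (h + g) (h + g) - L h h - (L h + dL) g) ≤ ε * ns g)
    -- conclusion 2: `d𝓛_{δ,h} : V_s → V_s` is bounded with norm ≤ `δ C₀ ‖h‖_ss + C`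
    ∧ (∀ g ∈ Bs, mass g = 0 → (L h + dL) g ∈ Bs ∧ mass ((L h + dL) g) = 0)
    ∧ (∀ g ∈ Bs, mass g = 0 →
      ns ((L h + dL) g) ≤ (δ * C₀ * nss h + C) * ns g) := by
  have hhs : h ∈ Bs := hBssBs hh
  set M := Bs ⊓ LinearMap.ker mass
  have hlin_mem : ∀ g ∈ M, L (h + g) h - L h h - dL g ∈ Bs := fun g hg =>
    Bs.sub_mem (Bs.sub_mem (hpres_s _ h hhs) (hpres_s _ h hhs)) (hdL_maps g hg.2).1
  have hf_M : IsLittleOOn nw ns M (fun g => L (h + g) h - L h h - dL g) :=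
    IsLittleOOn.mono (S := LinearMap.ker mass) (fun ε hε => hf ε hε) inf_le_right
      (fun _ _ => le_rfl) (fun _ _ => le_rfl)
  have hdL_le : ∀ g ∈ M, ns (dL g) ≤ δ * C₀ * nss h * nw g :=
    fun g hg => hf_M.le_mul_of_sub (φ := fun g => L (h + g) h - L h h) (fun g hg => by
      simpa using he₁ (h + g) (Bs.add_mem hhs hg.1) h hhs) hg
  have hsplit : (fun g => L (h + g) (h + g) - L h h - (L h + dL) g) =
      (fun g => L (h + g) h - L h h - dL g) + (fun g => L (h + g) g - L h g) := by
    ext g; simp only [map_add, LinearMap.add_apply, Pi.add_apply]; abel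
  have hfrechet : IsLittleOOn ns nw M
      (fun g => L (h + g) (h + g) - L h h - (L h + dL) g) := by
    rw [hsplit]
    refine (hf_M.mono le_rfl (fun g hg => hwle g hg.1) (fun g hg => hwle _ (hlin_mem g hg))).add
      (.of_le_mul_mul (K := δ * C₁) (by positivity) fun g hg => ?_)
    calc nw (L (h + g) g - L h g) ≤ δ * C₁ * ns g * nw g := by simpa using he₂ (h + g) h g hg.1
      _ ≤ δ * C₁ * ns g * ns g := by gcongr; exact hwle g hg.1
  refine ⟨fun ε hε => ?_, fun g hg hm => ?_, fun g hg hm => ?_⟩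
  · obtain ⟨r, hr, H⟩ := hfrechet ε hε
    exact ⟨r, hr, fun g hg hm => H g ⟨hg, hm⟩⟩
  · refine ⟨Bs.add_mem (hpres_s _ g hg) (hdL_maps g hm).1, ?_⟩
    simp only [LinearMap.add_apply, map_add, hMarkov, hm, (hdL_maps g hm).2, add_zero]
  · calc ns ((L h + dL) g) ≤ ns (L h g) + ns (dL g) := map_add_le_add ns _ _
      _ ≤ C * ns g + δ * C₀ * nss h * ns g :=
          add_le_add (hb_s h g hg) ((hdL_le g ⟨hg, hm⟩).trans (by gcongr; exact hwle g hg))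
      _ = (δ * C₀ * nss h + C) * ns g := by ring

/-- Under the standing assumptions (a), (e), (f), the self-consistent
transfer operator `𝓛_δ(f) = L_{δ,f}(f)` is Fréchet differentiable at its fixed point `h`
from the strong to the weak norm, with differential `d𝓛_{δ,h} = L_{δ,h} + ∂L_{δ,h}`;
and if moreover (b) holds with constant `C`, then `d𝓛_{δ,h} : V_s → V_s` is bounded with
norm at most `δ C₀ ‖h‖_ss + C`. -/
theorem frechet_differential_of_STO
    {V : Type*} [AddCommGroup V] [Module ℝ V]
    -- the three norms (weak, strong, strongest); the ambient space is `B_w = V`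
    (nw ns nss : Seminorm ℝ V)
    -- the subspaces `B_s` and `B_ss`
    (Bs Bss : Submodule ℝ V)
    (hBssBs : Bss ≤ Bs)
    (hwle : ∀ x ∈ Bs, nw x ≤ ns x)
    (hsle : ∀ x ∈ Bss, ns x ≤ nss x)
    -- total-mass functional `μ ↦ μ(X)`
    (mass : V →ₗ[ℝ] ℝ)
    -- coupling strength
    (δ : ℝ) (hδ : 0 ≤ δ)
    -- the family of Markov bounded operators `f ↦ L_{δ,f}`, preserving `B_s` and `B_ss`
    (L : V → Module.End ℝ V)
    (hMarkov : ∀ f x, mass (L f x) = mass x)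
    (hpres_s : ∀ f, ∀ x ∈ Bs, L f x ∈ Bs)
    (hpres_ss : ∀ f, ∀ x ∈ Bss, L f x ∈ Bss)
    -- (a) fixed point: `𝓛_δ h = L_{δ,h} h = h` with `h ∈ B_ss`
    (h : V) (hh : h ∈ Bss) (hfix : L h h = h)
    -- (b) boundedness in the three operator norms, with constant `C`
    (C : ℝ) (hC : 0 ≤ C)
    (hb_w : ∀ f x, nw (L f x) ≤ C * nw x)
    (hb_s : ∀ f, ∀ x ∈ Bs, ns (L f x) ≤ C * ns x)
    (hb_ss : ∀ f, ∀ x ∈ Bss, nss (L f x) ≤ C * nss x)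
    -- (e) regularity of the family of operators
    (C₀ : ℝ) (hC₀ : 0 < C₀)
    (he₁ : ∀ f ∈ Bs, ∀ g ∈ Bs, ns (L f h - L g h) ≤ δ * C₀ * nss h * nw (f - g))
    (C₁ : ℝ) (hC₁ : 0 < C₁)
    (he₂ : ∀ f₁ f₂ : V, ∀ g ∈ Bs, nw (L f₁ g - L f₂ g) ≤ δ * C₁ * ns g * nw (f₁ - f₂))
    -- (f) differentiability of the family at `h`: a bounded linear `∂L_{δ,h} : V_w → V_s`
    (dL : Module.End ℝ V)
    (hdL_maps : ∀ g : V, mass g = 0 → dL g ∈ Bs ∧ mass (dL g) = 0)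
    (hdL_bdd : ∃ K : ℝ, ∀ g : V, mass g = 0 → ns (dL g) ≤ K * nw g)
    (hf : ∀ ε > (0:ℝ), ∃ r > (0:ℝ), ∀ g : V, mass g = 0 → nw g ≤ r →
      ns (L (h + g) h - L h h - dL g) ≤ ε * nw g) :
    -- conclusion 1: Fréchet differentiability of `𝓛_δ` at `h` (strong → weak), with
    -- differential `d𝓛_{δ,h} = L_{δ,h} + ∂L_{δ,h}`
    (∀ ε > (0:ℝ), ∃ r > (0:ℝ), ∀ g ∈ Bs, mass g = 0 → ns g ≤ r →
      nw (L (h + g) (h + g) - L h h - (L h + dL) g) ≤ ε * ns g)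
    -- conclusion 2: `d𝓛_{δ,h} : V_s → V_s` is bounded with norm ≤ `δ C₀ ‖h‖_ss + C`
    ∧ (∀ g ∈ Bs, mass g = 0 → (L h + dL) g ∈ Bs ∧ mass ((L h + dL) g) = 0)
    ∧ (∀ g ∈ Bs, mass g = 0 →
      ns ((L h + dL) g) ≤ (δ * C₀ * nss h + C) * ns g) :=
  frechet_differential_of_STO_general nw ns nss Bs Bss hBssBs hwle mass δ hδ L hMarkov hpres_s h hh
    C hb_s C₀ hC₀ he₁ C₁ hC₁ he₂ dL hdL_maps hf
end

section
/- Suppose there is δ₀ > 0 such that for every δ ∈ [0,δ₀] the family L_{δ,f} and the corresponding self-consistent operator 𝓛_δ satisfy the standing assumptions (a)–(f) with fixed point h_δ ∈ B_ss and with constants in (b),(c),(e) independent of δ, that each ∂L_{δ,h_δ} is bounded from V_w to B_ss, and that sup_{δ∈[0,δ₀]} ‖h_δ‖_ss < ∞. Suppose moreover there exist n ∈ ℕ and ρ < 1 such that ‖L_{δ,h_δ}ⁿ‖_{V_s→V_s} ≤ ρ for every δ ∈ [0,δ₀]. Then there exists 0 < δ₁ ≤ δ₀ such that ‖d𝓛_{δ,h_δ}ⁿ‖_{V_s→V_s}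 < 1 for every 0 < δ ≤ δ₁. -/
/-! By (e), `g ↦ L_{δ,h+g}(h) - L_{δ,h}(h)` is `δ C₀ ‖h‖_ss`-Lipschitz from the weak to the strong
norm, so its derivative `∂L_{δ,h}` has strong norm `O(δ)` on `V_s`. Then `d𝓛ⁿ = (L_{δ,h} + ∂L_{δ,h})ⁿ`
differs from `L_{δ,h}ⁿ` by at most `(C + O(δ))ⁿ - Cⁿ = O(δ)` in norm, while `‖L_{δ,h}ⁿ‖ ≤ ρ < 1`. -/

open Filter MeasureTheory

/-- Sequential composition `L_{f₁} ∘ ⋯ ∘ L_{fₙ}` of a family of operators along a list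
of measures `[f₁, …, fₙ]`. -/
def seqComp {V : Type*} [AddCommGroup V] [Module ℝ V]
    (L : V → Module.End ℝ V) : List V → V → V
  | [], g => g
  | f :: t, g => L f (seqComp L t g)

open Topology

section FirstOrderApprox

variable {E F : Type*} [AddCommGroup E] [Module ℝ E] [AddCommGroup F] [Module ℝ F]

/-- Rescale `x` into the ball where the approximation holds, then let `ε → 0`. -/
theorem LinearMap.seminorm_apply_le_of_approx (p : Seminorm ℝ E) (q : Seminorm ℝ F)
    (S : Submodule ℝ E) (D : E →ₗ[ℝ] F) (Φ : E → F) {M : ℝ}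
    (hΦ : ∀ x ∈ S, q (Φ x) ≤ M * p x)
    (hD : ∀ ε > 0, ∃ r > 0, ∀ x ∈ S, p x ≤ r → q (Φ x - D x) ≤ ε * p x) :
    ∀ x ∈ S, q (D x) ≤ M * p x := by
  intro x hx
  have hbound : ∀ ε > 0, q (D x) ≤ (M + ε) * p x := by
    intro ε hε
    obtain ⟨r, hr, hrD⟩ := hD ε hε
    set t := r / (p x + 1)
    have ht : 0 < t := div_pos hr (by positivity)
    have hpt : p (t • x) = t * p x := by rw [map_smul_eq_mul, Real.norm_of_nonneg ht.le]
    have htx : p (t • x) ≤ r := by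
      rw [hpt, div_mul_eq_mul_div, div_le_iff₀ (by positivity)]
      nlinarith [apply_nonneg p x]
    have htS : t • x ∈ S := S.smul_mem t hx
    refine le_of_mul_le_mul_left ?_ ht
    calc t * q (D x) = q (D (t • x)) := by
          rw [map_smul, map_smul_eq_mul, Real.norm_of_nonneg ht.le]
      _ ≤ q (Φ (t • x)) + q (Φ (t • x) - D (t • x)) := by
          rw [map_sub_rev q]; exact le_map_add_map_sub q _ _
      _ ≤ M * p (t • x) + ε * p (t • x) := add_le_add (hΦ _ htS) (hrD _ htS htx)
      _ = t * ((M + ε) * p x) := by rw [hpt]; ring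
  have hlim : Tendsto (fun ε => (M + ε) * p x) (𝓝[>] 0) (𝓝 (M * p x)) := by
    refine tendsto_nhdsWithin_of_tendsto_nhds (Continuous.tendsto' ?_ 0 _ (by simp))
    fun_prop
  exact ge_of_tendsto hlim (eventually_nhdsWithin_of_forall hbound)

end FirstOrderApprox

section InvariantSubspace

variable {E : Type*} [AddCommGroup E] [Module ℝ E] (p : Seminorm ℝ E) {S : Submodule ℝ E}

theorem Seminorm.pow_apply_le {U : Module.End ℝ E} (hUS : ∀ x ∈ S, U x ∈ S) {K : ℝ}
    (hK : 0 ≤ K) (hU : ∀ x ∈ S, p (U x) ≤ K * p x) (k : ℕ) :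
    ∀ x ∈ S, p ((U ^ k) x) ≤ K ^ k * p x := by
  induction k with
  | zero => simp
  | succ k ih =>
    intro x hx
    calc p ((U ^ (k + 1)) x) = p (U ((U ^ k) x)) := by rw [pow_succ', Module.End.mul_apply]
      _ ≤ K * p ((U ^ k) x) := hU _ (Module.End.pow_apply_mem_of_forall_mem k hUS x hx)
      _ ≤ K * (K ^ k * p x) := mul_le_mul_of_nonneg_left (ih x hx) hK
      _ = K ^ (k + 1) * p x := by ring

variable {T D : Module.End ℝ E} (hTS : ∀ x ∈ S, T x ∈ S) (hDS : ∀ x ∈ S, D x ∈ S)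
  {C ε : ℝ} (hC : 0 ≤ C) (hε : 0 ≤ ε)
  (hT : ∀ x ∈ S, p (T x) ≤ C * p x) (hD : ∀ x ∈ S, p (D x) ≤ ε * p x)
include hTS hDS hC hε hT hD

theorem Seminorm.pow_add_apply_sub_pow_apply_le (k : ℕ) :
    ∀ x ∈ S, p (((T + D) ^ k) x - (T ^ k) x) ≤ ((C + ε) ^ k - C ^ k) * p x := by
  have hTDS : ∀ x ∈ S, (T + D) x ∈ S := fun x hx => S.add_mem (hTS x hx) (hDS x hx)
  have hTD : ∀ x ∈ S, p ((T + D) x) ≤ (C + ε) * p x := fun x hx =>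
    (map_add_le_add p _ _).trans ((add_le_add (hT x hx) (hD x hx)).trans_eq (add_mul ..).symm)
  induction k with
  | zero => simp
  | succ k ih =>
    intro x hx
    set y := ((T + D) ^ k) x
    have hy : y ∈ S := Module.End.pow_apply_mem_of_forall_mem k hTDS x hx
    have hyS : y - (T ^ k) x ∈ S :=
      S.sub_mem hy (Module.End.pow_apply_mem_of_forall_mem k hTS x hx)
    have hsplit : ((T + D) ^ (k + 1)) x - (T ^ (k + 1)) x = T (y - (T ^ k) x) + D y := by
      simp only [pow_succ', Module.End.mul_apply, LinearMap.add_apply, map_sub, y]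
      abel
    calc p (((T + D) ^ (k + 1)) x - (T ^ (k + 1)) x)
        ≤ p (T (y - (T ^ k) x)) + p (D y) := hsplit ▸ map_add_le_add p _ _
      _ ≤ C * (((C + ε) ^ k - C ^ k) * p x) + ε * ((C + ε) ^ k * p x) := by
          gcongr
          · exact (hT _ hyS).trans (mul_le_mul_of_nonneg_left (ih x hx) hC)
          · exact (hD _ hy).trans (mul_le_mul_of_nonneg_left
              (p.pow_apply_le hTDS (by positivity) hTD k x hx) hε)
      _ = ((C + ε) ^ (k + 1) - C ^ (k + 1)) * p x := by ring

theorem Seminorm.pow_add_apply_le {n : ℕ} {ρ : ℝ} (hTn : ∀ x ∈ S, p ((T ^ n) x) ≤ ρ * p x) :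
    ∀ x ∈ S, p (((T + D) ^ n) x) ≤ (ρ + ((C + ε) ^ n - C ^ n)) * p x := fun x hx =>
  calc p (((T + D) ^ n) x) ≤ p ((T ^ n) x) + p (((T + D) ^ n) x - (T ^ n) x) :=
        le_map_add_map_sub p _ _
    _ ≤ ρ * p x + ((C + ε) ^ n - C ^ n) * p x :=
        add_le_add (hTn x hx) (p.pow_add_apply_sub_pow_apply_le hTS hDS hC hε hT hD n x hx)
    _ = (ρ + ((C + ε) ^ n - C ^ n)) * p x := (add_mul ..).symm

end InvariantSubspace

theorem exists_pos_le_forall_Icc_lt {φ : ℝ → ℝ} (hφ : ContinuousAt φ 0) {c : ℝ} (hc : φ 0 < c)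
    {δ₀ : ℝ} (hδ₀ : 0 < δ₀) : ∃ δ₁, 0 < δ₁ ∧ δ₁ ≤ δ₀ ∧ ∀ δ ∈ Set.Icc 0 δ₁, φ δ < c := by
  obtain ⟨δ₁, hδ₁, hsub⟩ := mem_nhdsGE_iff_exists_Icc_subset.1 <| nhdsWithin_le_nhds <|
    inter_mem (hφ.eventually_lt continuousAt_const hc) (Iic_mem_nhds hδ₀)
  exact ⟨δ₁, hδ₁, (hsub ⟨hδ₁.le, le_rfl⟩).2, fun δ hδ => (hsub hδ).1⟩

theorem differential_contracts_weak_coupling_general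
    {V : Type*} [AddCommGroup V] [Module ℝ V]
    -- the three norms (weak, strong, strongest); the ambient space is `B_w = V`
    (nw ns nss : Seminorm ℝ V)
    -- the subspaces `B_s` and `B_ss`
    (Bs Bss : Submodule ℝ V)
    (hBssBs : Bss ≤ Bs)
    (hwle : ∀ x ∈ Bs, nw x ≤ ns x)
    -- total-mass functional `μ ↦ μ(X)` and the set of probability measures in `B_w`
    (mass : V →ₗ[ℝ] ℝ)
    -- the range of coupling strengths
    (δ₀ : ℝ) (hδ₀ : 0 < δ₀)
    -- the family of Markov bounded operators `(δ, f) ↦ L_{δ,f}`, preserving `B_s`, `B_ss`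
    (L : ℝ → V → Module.End ℝ V)
    (hMarkov : ∀ δ ∈ Set.Icc 0 δ₀, ∀ f x, mass (L δ f x) = mass x)
    (hpres_s : ∀ δ ∈ Set.Icc 0 δ₀, ∀ f, ∀ x ∈ Bs, L δ f x ∈ Bs)
    -- (a) fixed points `h_δ ∈ B_ss`
    (h : ℝ → V)
    (hh : ∀ δ ∈ Set.Icc 0 δ₀, h δ ∈ Bss)
    -- `sup_δ ‖h_δ‖_ss < ∞`
    (Kh : ℝ) (hKh : ∀ δ ∈ Set.Icc 0 δ₀, nss (h δ) ≤ Kh)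
    -- (b) boundedness, with constant independent of `δ`
    (C : ℝ) (hC : 0 ≤ C)
    (hb_s : ∀ δ ∈ Set.Icc 0 δ₀, ∀ f, ∀ x ∈ Bs, ns (L δ f x) ≤ C * ns x)
    -- (e) regularity of the family, with constants independent of `δ`
    (C₀ : ℝ) (hC₀ : 0 < C₀)
    (he₁ : ∀ δ ∈ Set.Icc 0 δ₀, ∀ f ∈ Bs, ∀ g ∈ Bs,
      ns (L δ f (h δ) - L δ g (h δ)) ≤ δ * C₀ * nss (h δ) * nw (f - g))
    -- (f) differentiability of the family at `h_δ`: bounded linear `∂L_{δ,h_δ} : V_w → V_s`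
    (dL : ℝ → Module.End ℝ V)
    (hdL_maps : ∀ δ ∈ Set.Icc 0 δ₀, ∀ g : V, mass g = 0 → dL δ g ∈ Bs ∧ mass (dL δ g) = 0)
    (hf : ∀ δ ∈ Set.Icc 0 δ₀, ∀ ε > (0:ℝ), ∃ r > (0:ℝ), ∀ g : V, mass g = 0 → nw g ≤ r →
      ns (L δ (h δ + g) (h δ) - L δ (h δ) (h δ) - dL δ g) ≤ ε * nw g)
    -- `‖L_{δ,h_δ}ⁿ‖_{V_s→V_s} ≤ ρ < 1` uniformly in `δ`
    (n : ℕ) (ρ : ℝ) (hρ : ρ < 1)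
    (hLn : ∀ δ ∈ Set.Icc 0 δ₀, ∀ g ∈ Bs, mass g = 0 →
      ns ((L δ (h δ) ^ n) g) ≤ ρ * ns g) :
    -- conclusion: `‖d𝓛_{δ,h_δ}ⁿ‖_{V_s→V_s} < 1` for all `0 < δ ≤ δ₁`
    ∃ δ₁ : ℝ, 0 < δ₁ ∧ δ₁ ≤ δ₀ ∧ ∀ δ : ℝ, 0 < δ → δ ≤ δ₁ →
      ∃ ρ' < (1:ℝ), ∀ g ∈ Bs, mass g = 0 →
        ns (((L δ (h δ) + dL δ) ^ n) g) ≤ ρ' * ns g := by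
  set Vs : Submodule ℝ V := Bs ⊓ LinearMap.ker mass
  set M := C₀ * Kh
  have hM : 0 ≤ M := mul_nonneg hC₀.le ((apply_nonneg _ _).trans (hKh 0 ⟨le_rfl, hδ₀.le⟩))
  have hL_Vs : ∀ δ ∈ Set.Icc 0 δ₀, ∀ g ∈ Vs, L δ (h δ) g ∈ Vs := fun δ hδ g ⟨hg, hmg⟩ =>
    ⟨hpres_s δ hδ _ g hg, (hMarkov δ hδ _ g).trans hmg⟩
  have hdL_Vs : ∀ δ ∈ Set.Icc 0 δ₀, ∀ g ∈ Vs, dL δ g ∈ Vs := fun δ hδ g ⟨_, hmg⟩ =>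
    hdL_maps δ hδ g hmg
  have hdL_small : ∀ δ ∈ Set.Icc 0 δ₀, ∀ g ∈ Vs, ns (dL δ g) ≤ δ * M * ns g := by
    intro δ hδ g hg
    have hhs : h δ ∈ Bs := hBssBs (hh δ hδ)
    have hbound := (dL δ).seminorm_apply_le_of_approx nw ns Vs
      (fun g => L δ (h δ + g) (h δ) - L δ (h δ) (h δ)) (M := δ * M)
      (fun g hg => (he₁ δ hδ _ (Bs.add_mem hhs hg.1) _ hhs).trans <| by
        rw [add_sub_cancel_left, ← mul_assoc δ]
        gcongr
        exacts [mul_nonneg hδ.1 hC₀.le, hKh δ hδ])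
      (fun ε hε => (hf δ hδ ε hε).imp fun r ⟨hr, hfr⟩ => ⟨hr, fun g hg => hfr g hg.2⟩)
    exact (hbound g hg).trans (by gcongr; exacts [mul_nonneg hδ.1 hM, hwle g hg.1])
  obtain ⟨δ₁, hδ₁, hδ₁δ₀, hsmall⟩ := exists_pos_le_forall_Icc_lt
    (φ := fun δ => (C + δ * M) ^ n - C ^ n) (by fun_prop) (c := 1 - ρ) (by simpa) hδ₀
  refine ⟨δ₁, hδ₁, hδ₁δ₀, fun δ hδ hδδ₁ => ⟨ρ + ((C + δ * M) ^ n - C ^ n),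
    by linarith [hsmall δ ⟨hδ.le, hδδ₁⟩], fun g hg hmg => ?_⟩⟩
  have hδ : δ ∈ Set.Icc 0 δ₀ := ⟨hδ.le, hδδ₁.trans hδ₁δ₀⟩
  exact ns.pow_add_apply_le (hL_Vs δ hδ) (hdL_Vs δ hδ) hC (mul_nonneg hδ.1 hM)
    (fun g hg => hb_s δ hδ _ g hg.1) (hdL_small δ hδ) (fun g hg => hLn δ hδ g hg.1 hg.2) g ⟨hg, hmg⟩

/-- Suppose that for every `δ ∈ [0,δ₀]` the family `L_{δ,f}` and the
self-consistent transfer operator `𝓛_δ(f) = L_{δ,f}(f)` satisfy the standing assumptions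
(a)–(f) with fixed point `h_δ ∈ B_ss`, constants in (b), (c), (e) independent of `δ`,
that each `∂L_{δ,h_δ}` is bounded from `V_w` to `B_ss`, and `sup_δ ‖h_δ‖_ss < ∞`.
If there are `n ∈ ℕ` and `ρ < 1` with `‖L_{δ,h_δ}ⁿ‖_{V_s→V_s} ≤ ρ` for all `δ ∈ [0,δ₀]`,
then there is `0 < δ₁ ≤ δ₀` such that `‖d𝓛_{δ,h_δ}ⁿ‖_{V_s→V_s} < 1` for all `0 < δ ≤ δ₁`. -/
theorem differential_contracts_weak_coupling
    {V : Type*} [AddCommGroup V] [Module ℝ V]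
    -- the three norms (weak, strong, strongest); the ambient space is `B_w = V`
    (nw ns nss : Seminorm ℝ V)
    -- the subspaces `B_s` and `B_ss`
    (Bs Bss : Submodule ℝ V)
    (hBssBs : Bss ≤ Bs)
    (hwle : ∀ x ∈ Bs, nw x ≤ ns x)
    (hsle : ∀ x ∈ Bss, ns x ≤ nss x)
    -- total-mass functional `μ ↦ μ(X)` and the set of probability measures in `B_w`
    (mass : V →ₗ[ℝ] ℝ)
    (P : Set V) (hP : ∀ μ ∈ P, mass μ = 1)
    -- the range of coupling strengths
    (δ₀ : ℝ) (hδ₀ : 0 < δ₀)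
    -- the family of Markov bounded operators `(δ, f) ↦ L_{δ,f}`, preserving `B_s`, `B_ss`
    (L : ℝ → V → Module.End ℝ V)
    (hMarkov : ∀ δ ∈ Set.Icc 0 δ₀, ∀ f x, mass (L δ f x) = mass x)
    (hpres_s : ∀ δ ∈ Set.Icc 0 δ₀, ∀ f, ∀ x ∈ Bs, L δ f x ∈ Bs)
    (hpres_ss : ∀ δ ∈ Set.Icc 0 δ₀, ∀ f, ∀ x ∈ Bss, L δ f x ∈ Bss)
    -- (a) fixed points `h_δ ∈ B_ss`
    (h : ℝ → V)
    (hh : ∀ δ ∈ Set.Icc 0 δ₀, h δ ∈ Bss)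
    (hfix : ∀ δ ∈ Set.Icc 0 δ₀, L δ (h δ) (h δ) = h δ)
    -- `sup_δ ‖h_δ‖_ss < ∞`
    (Kh : ℝ) (hKh : ∀ δ ∈ Set.Icc 0 δ₀, nss (h δ) ≤ Kh)
    -- (b) boundedness, with constant independent of `δ`
    (C : ℝ) (hC : 0 ≤ C)
    (hb_w : ∀ δ ∈ Set.Icc 0 δ₀, ∀ f x, nw (L δ f x) ≤ C * nw x)
    (hb_s : ∀ δ ∈ Set.Icc 0 δ₀, ∀ f, ∀ x ∈ Bs, ns (L δ f x) ≤ C * ns x)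
    (hb_ss : ∀ δ ∈ Set.Icc 0 δ₀, ∀ f, ∀ x ∈ Bss, nss (L δ f x) ≤ C * nss x)
    -- (c) sequential Lasota-Yorke inequalities, with constants independent of `δ`
    (A B lam : ℝ) (hA : 0 < A) (hB : 0 < B) (hlam : lam < 1)
    (hc_w : ∀ δ ∈ Set.Icc 0 δ₀, ∀ fs : List V, (∀ f ∈ fs, f ∈ P) → ∀ g ∈ Bs,
      nw (seqComp (L δ) fs g) ≤ B * nw g)
    (hc_s : ∀ δ ∈ Set.Icc 0 δ₀, ∀ fs : List V, (∀ f ∈ fs, f ∈ P) → ∀ g ∈ Bs,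
      ns (seqComp (L δ) fs g) ≤ A * lam ^ fs.length * ns g + B * nw g)
    -- (d) convergence to equilibrium for each `L_{δ,h_δ}`
    (hd : ∀ δ ∈ Set.Icc 0 δ₀, ∃ a : ℕ → ℝ, (∀ n, 0 ≤ a n) ∧ Tendsto a atTop (nhds 0) ∧
      ∀ n : ℕ, ∀ μ ∈ Bs, mass μ = 0 → nw ((L δ (h δ) ^ n) μ) ≤ a n * ns μ)
    -- (e) regularity of the family, with constants independent of `δ`
    (C₀ : ℝ) (hC₀ : 0 < C₀)
    (he₁ : ∀ δ ∈ Set.Icc 0 δ₀, ∀ f ∈ Bs, ∀ g ∈ Bs,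
      ns (L δ f (h δ) - L δ g (h δ)) ≤ δ * C₀ * nss (h δ) * nw (f - g))
    (C₁ : ℝ) (hC₁ : 0 < C₁)
    (he₂ : ∀ δ ∈ Set.Icc 0 δ₀, ∀ f₁ f₂ : V, ∀ g ∈ Bs,
      nw (L δ f₁ g - L δ f₂ g) ≤ δ * C₁ * ns g * nw (f₁ - f₂))
    -- (f) differentiability of the family at `h_δ`: bounded linear `∂L_{δ,h_δ} : V_w → V_s`
    (dL : ℝ → Module.End ℝ V)
    (hdL_maps : ∀ δ ∈ Set.Icc 0 δ₀, ∀ g : V, mass g = 0 → dL δ g ∈ Bs ∧ mass (dL δ g) = 0)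
    (hdL_bdd : ∀ δ ∈ Set.Icc 0 δ₀, ∃ K : ℝ, ∀ g : V, mass g = 0 → ns (dL δ g) ≤ K * nw g)
    (hf : ∀ δ ∈ Set.Icc 0 δ₀, ∀ ε > (0:ℝ), ∃ r > (0:ℝ), ∀ g : V, mass g = 0 → nw g ≤ r →
      ns (L δ (h δ + g) (h δ) - L δ (h δ) (h δ) - dL δ g) ≤ ε * nw g)
    -- each `∂L_{δ,h_δ}` is bounded as an operator from `V_w` to `B_ss`
    (hdL_ss : ∀ δ ∈ Set.Icc 0 δ₀, ∀ g : V, mass g = 0 → dL δ g ∈ Bss)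
    (hdL_ss_bdd : ∀ δ ∈ Set.Icc 0 δ₀, ∃ K : ℝ, ∀ g : V, mass g = 0 → nss (dL δ g) ≤ K * nw g)
    -- `‖L_{δ,h_δ}ⁿ‖_{V_s→V_s} ≤ ρ < 1` uniformly in `δ`
    (n : ℕ) (ρ : ℝ) (hρ : ρ < 1)
    (hLn : ∀ δ ∈ Set.Icc 0 δ₀, ∀ g ∈ Bs, mass g = 0 →
      ns ((L δ (h δ) ^ n) g) ≤ ρ * ns g) :
    -- conclusion: `‖d𝓛_{δ,h_δ}ⁿ‖_{V_s→V_s} < 1` for all `0 < δ ≤ δ₁`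
    ∃ δ₁ : ℝ, 0 < δ₁ ∧ δ₁ ≤ δ₀ ∧ ∀ δ : ℝ, 0 < δ → δ ≤ δ₁ →
      ∃ ρ' < (1:ℝ), ∀ g ∈ Bs, mass g = 0 →
        ns (((L δ (h δ) + dL δ) ^ n) g) ≤ ρ' * ns g :=
  differential_contracts_weak_coupling_general nw ns nss Bs Bss hBssBs hwle mass δ₀ hδ₀ L hMarkov
    hpres_s h hh Kh hKh C hC hb_s C₀ hC₀ he₁ dL hdL_maps hf n ρ hρ hLn
end

section
/- Given constants A, M ≥ 0, λ₁ < 1 ≤ B and a sequence (aₙ) of nonnegative reals with aₙ → 0, there exist ε₀ > 0 and C, λ > 0 such that the following holds: for every sequence {L_i}_{i≥1} of Markov linear operators B_s → B_s satisfying (ML1) with constants A, B, M, λ₁, (ML2) with some ε ≤ ε₀ and a Markov operator L₀, and (ML3) for L₀ with the sequence (aₙ), one has ‖L^{(j,j+n−1)} g‖_s ≤ C e^{−λ n} ‖g‖_s for all j, n ≥ 1 and every g ∈ V_s (exponential loss of memory). -/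
/-!
Split time into blocks of length `2N`. Over the first half of a block the sequential
composition stays weakly close to `L₀ᴺ` (telescoping with (ML2), an error `O(ε)`), and `L₀ᴺ`
is weakly small on zero-mass measures by (ML3); the Lasota–Yorke inequality (ML1) over the
second half turns this weak smallness into a strong contraction by `1/2` once `N` is large
and `ε` small. Since the operators preserve mass, the blocks can be iterated, giving decay
`(1/2)^{n/2N}`.
-/

open Filter MeasureTheory

/-- The sequential composition `L_{i+n} ∘ ⋯ ∘ L_{i+1}` of a sequence of operators. -/
def opComp {V : Type*} [AddCommGroup V] [Module ℝ V]
    (L : ℕ → Module.End ℝ V) (i : ℕ) : ℕ → Module.End ℝ V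
  | 0 => 1
  | n + 1 => L (i + n + 1) * opComp L i n

open Finset

section

variable {V : Type*} [AddCommGroup V] [Module ℝ V] {nw ns : Seminorm ℝ V} {Bs : Submodule ℝ V}
  {L : ℕ → Module.End ℝ V} {L₀ : Module.End ℝ V}

theorem opComp_add (L : ℕ → Module.End ℝ V) (i m n : ℕ) :
    opComp L i (m + n) = opComp L (i + m) n * opComp L i m := by
  induction n with
  | zero => simp [opComp]
  | succ n ih =>
    rw [← add_assoc, opComp, opComp, ih, mul_assoc, ← add_assoc i m n]

theorem opComp_apply_mem (hL : ∀ i, 1 ≤ i → ∀ f ∈ Bs, L i f ∈ Bs) (i n : ℕ) {f : V}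
    (hf : f ∈ Bs) : opComp L i n f ∈ Bs := by
  induction n with
  | zero => exact hf
  | succ n ih => exact hL _ (by omega) _ ih

theorem pow_apply_mem (hL₀ : ∀ f ∈ Bs, L₀ f ∈ Bs) (n : ℕ) {f : V} (hf : f ∈ Bs) :
    (L₀ ^ n) f ∈ Bs := by
  rw [Module.End.coe_pow]
  exact Set.MapsTo.iterate (fun f hf => hL₀ f hf) n hf

theorem map_opComp_apply (mass : V →ₗ[ℝ] ℝ) (hL : ∀ i, 1 ≤ i → ∀ f, mass (L i f) = mass f)
    (i n : ℕ) (f : V) : mass (opComp L i n f) = mass f := by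
  induction n with
  | zero => rfl
  | succ n ih => exact (hL _ (by omega) _).trans ih

theorem ns_opComp_le (hwle : ∀ x ∈ Bs, nw x ≤ ns x) {A B lam₁ : ℝ} (hA : 0 ≤ A) (hB : 1 ≤ B)
    (hlam₁0 : 0 ≤ lam₁) (hlam₁ : lam₁ ≤ 1)
    (hML1s : ∀ i n : ℕ, 1 ≤ n → ∀ f ∈ Bs, ns (opComp L i n f) ≤ A * lam₁ ^ n * ns f + B * nw f)
    (i n : ℕ) {f : V} (hf : f ∈ Bs) : ns (opComp L i n f) ≤ (A + B) * ns f := by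
  have hnsf := apply_nonneg ns f
  rcases n with _ | n
  · show ns f ≤ _
    nlinarith
  · calc ns (opComp L i (n + 1) f) ≤ A * lam₁ ^ (n + 1) * ns f + B * nw f :=
          hML1s i (n + 1) (by omega) f hf
      _ ≤ A * 1 * ns f + B * ns f := by
          gcongr
          exacts [pow_le_one₀ hlam₁0 hlam₁, hwle f hf]
      _ = (A + B) * ns f := by ring

theorem nw_pow_apply_sub_opComp_le (hL : ∀ i, 1 ≤ i → ∀ f ∈ Bs, L i f ∈ Bs)
    (hL₀ : ∀ f ∈ Bs, L₀ f ∈ Bs) {M ε K : ℝ} (hM : 0 ≤ M) (hε : 0 ≤ ε)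
    (hL₀w : ∀ x ∈ Bs, nw (L₀ x) ≤ M * nw x)
    (hML2 : ∀ j, 1 ≤ j → ∀ f ∈ Bs, nw (L₀ f - L j f) ≤ ε * ns f) (i : ℕ)
    (hbound : ∀ n, ∀ f ∈ Bs, ns (opComp L i n f) ≤ K * ns f) (n : ℕ) {f : V} (hf : f ∈ Bs) :
    nw ((L₀ ^ n) f - opComp L i n f) ≤ ε * K * (∑ k ∈ range n, M ^ k) * ns f := by
  induction n with
  | zero => simp [opComp]
  | succ n ih =>
    set w := opComp L i n f
    have hw : w ∈ Bs := opComp_apply_mem hL i n hf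
    have hd : (L₀ ^ n) f - w ∈ Bs := Bs.sub_mem (pow_apply_mem hL₀ n hf) hw
    have hsplit : (L₀ ^ (n + 1)) f - opComp L i (n + 1) f
        = L₀ ((L₀ ^ n) f - w) + (L₀ w - L (i + n + 1) w) := by
      rw [pow_succ', Module.End.mul_apply, map_sub]
      show _ - L (i + n + 1) w = _
      abel
    calc nw ((L₀ ^ (n + 1)) f - opComp L i (n + 1) f)
        ≤ nw (L₀ ((L₀ ^ n) f - w)) + nw (L₀ w - L (i + n + 1) w) := by
          rw [hsplit]; exact map_add_le_add nw _ _
      _ ≤ M * (ε * K * (∑ k ∈ range n, M ^ k) * ns f) + ε * (K * ns f) :=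
          add_le_add ((hL₀w _ hd).trans (mul_le_mul_of_nonneg_left ih hM))
            ((hML2 _ (by omega) _ hw).trans (mul_le_mul_of_nonneg_left (hbound n f hf) hε))
      _ = ε * K * (∑ k ∈ range (n + 1), M ^ k) * ns f := by rw [geom_sum_succ]; ring

theorem ns_opComp_add_self_le (hwle : ∀ x ∈ Bs, nw x ≤ ns x)
    (hL : ∀ i, 1 ≤ i → ∀ f ∈ Bs, L i f ∈ Bs) (hL₀ : ∀ f ∈ Bs, L₀ f ∈ Bs)
    {A B M lam₁ ε α : ℝ} (hA : 0 ≤ A) (hB : 1 ≤ B) (hM : 0 ≤ M) (hlam₁0 : 0 ≤ lam₁)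
    (hlam₁ : lam₁ ≤ 1) (hε : 0 ≤ ε)
    (hML1s : ∀ i n : ℕ, 1 ≤ n → ∀ f ∈ Bs, ns (opComp L i n f) ≤ A * lam₁ ^ n * ns f + B * nw f)
    (hL₀w : ∀ x ∈ Bs, nw (L₀ x) ≤ M * nw x)
    (hML2 : ∀ j, 1 ≤ j → ∀ f ∈ Bs, nw (L₀ f - L j f) ≤ ε * ns f)
    {N : ℕ} (hN : 1 ≤ N) (i : ℕ) {f : V} (hf : f ∈ Bs) (hf₀ : nw ((L₀ ^ N) f) ≤ α * ns f) :
    ns (opComp L i (N + N) f)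
      ≤ (A * lam₁ ^ N * (A + B) + B * (α + ε * (A + B) * ∑ k ∈ range N, M ^ k)) * ns f := by
  set w := opComp L i N f
  have hw : w ∈ Bs := opComp_apply_mem hL i N hf
  have hbound := ns_opComp_le hwle hA hB hlam₁0 hlam₁ hML1s
  have hws : ns w ≤ (A + B) * ns f := hbound i N hf
  have hww : nw w ≤ (α + ε * (A + B) * ∑ k ∈ range N, M ^ k) * ns f :=
    calc nw w = nw ((L₀ ^ N) f - ((L₀ ^ N) f - w)) := by rw [sub_sub_cancel]
      _ ≤ nw ((L₀ ^ N) f) + nw ((L₀ ^ N) f - w) := map_sub_le_add nw _ _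
      _ ≤ α * ns f + ε * (A + B) * (∑ k ∈ range N, M ^ k) * ns f :=
          add_le_add hf₀
            (nw_pow_apply_sub_opComp_le hL hL₀ hM hε hL₀w hML2 i (hbound i) N hf)
      _ = (α + ε * (A + B) * ∑ k ∈ range N, M ^ k) * ns f := by ring
  calc ns (opComp L i (N + N) f) = ns (opComp L (i + N) N w) := by rw [opComp_add]; rfl
    _ ≤ A * lam₁ ^ N * ns w + B * nw w := hML1s (i + N) N hN w hw
    _ ≤ A * lam₁ ^ N * ((A + B) * ns f)
          + B * ((α + ε * (A + B) * ∑ k ∈ range N, M ^ k) * ns f) := by gcongr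
    _ = _ := by ring

theorem ns_opComp_le_inv_two_pow_div (mass : V →ₗ[ℝ] ℝ)
    (hL : ∀ i, 1 ≤ i → ∀ f ∈ Bs, L i f ∈ Bs) (hLmass : ∀ i, 1 ≤ i → ∀ f, mass (L i f) = mass f)
    {K : ℝ} (hK : 0 ≤ K) (hbound : ∀ i n, ∀ f ∈ Bs, ns (opComp L i n f) ≤ K * ns f)
    {p : ℕ} (hp : 0 < p)
    (hblock : ∀ i, ∀ f ∈ Bs, mass f = 0 → ns (opComp L i p f) ≤ 2⁻¹ * ns f) (n : ℕ) :
    ∀ i, ∀ f ∈ Bs, mass f = 0 → ns (opComp L i n f) ≤ K * 2⁻¹ ^ (n / p) * ns f := by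
  induction n using Nat.strong_induction_on with
  | _ n ih =>
    intro i f hf hmf
    rcases lt_or_ge n p with hn | hn
    · rw [Nat.div_eq_of_lt hn, pow_zero, mul_one]
      exact hbound i n f hf
    obtain ⟨m, rfl⟩ : ∃ m, n = p + m := ⟨n - p, by omega⟩
    set w := opComp L i p f
    have hw : w ∈ Bs := opComp_apply_mem hL i p hf
    have hmw : mass w = 0 := (map_opComp_apply mass hLmass i p f).trans hmf
    calc ns (opComp L i (p + m) f) = ns (opComp L (i + p) m w) := by rw [opComp_add]; rfl
      _ ≤ K * 2⁻¹ ^ (m / p) * ns w := ih m (by omega) (i + p) w hw hmw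
      _ ≤ K * 2⁻¹ ^ (m / p) * (2⁻¹ * ns f) := by gcongr; exact hblock i f hf hmf
      _ = K * 2⁻¹ ^ ((p + m) / p) * ns f := by
          rw [Nat.add_div_left _ hp, pow_succ]; ring

end

theorem inv_two_pow_div_le (n p : ℕ) :
    (2⁻¹ : ℝ) ^ (n / p) ≤ 2 * Real.exp (-(Real.log 2 / p) * n) := by
  have hq : (n : ℝ) / p ≤ (n / p : ℕ) + 1 := by
    rw [← Nat.floor_div_eq_div (K := ℝ)]
    exact (Nat.lt_floor_add_one _).le
  have hlog : 0 < Real.log 2 := Real.log_pos one_lt_two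
  calc (2⁻¹ : ℝ) ^ (n / p) = Real.exp (-(Real.log 2 * (n / p : ℕ))) := by
        rw [← Real.rpow_natCast, Real.rpow_def_of_pos (by norm_num), Real.log_inv, neg_mul]
    _ ≤ Real.exp (Real.log 2 + -(Real.log 2 / p) * n) := by
        gcongr
        rw [neg_mul, div_mul_eq_mul_div, mul_div_assoc]
        nlinarith
    _ = 2 * Real.exp (-(Real.log 2 / p) * n) := by rw [Real.exp_add, Real.exp_log two_pos]

theorem exponential_loss_of_memory_general
    {V : Type*} [AddCommGroup V] [Module ℝ V]
    -- the two norms; the ambient space is `B_w = V`, `B_s` a subspace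
    (nw ns : Seminorm ℝ V)
    (Bs : Submodule ℝ V)
    (hwle : ∀ x ∈ Bs, nw x ≤ ns x)
    -- total-mass functional `μ ↦ μ(X)`
    (mass : V →ₗ[ℝ] ℝ)
    -- the constants
    (A B M lam₁ : ℝ) (hA : 0 ≤ A) (hB : 1 ≤ B) (hM : 0 ≤ M)
    (hlam₁0 : 0 ≤ lam₁) (hlam₁ : lam₁ < 1)
    (a : ℕ → ℝ) (halim : Tendsto a atTop (nhds 0)) :
    ∃ ε₀ > (0:ℝ), ∃ C > (0:ℝ), ∃ lam > (0:ℝ),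
      ∀ (L : ℕ → Module.End ℝ V) (L₀ : Module.End ℝ V) (ε : ℝ),
        0 < ε → ε ≤ ε₀ →
        -- the operators map `B_s` to itself and are Markov (mass preserving)
        (∀ i, 1 ≤ i → ∀ f ∈ Bs, L i f ∈ Bs) →
        (∀ f ∈ Bs, L₀ f ∈ Bs) →
        (∀ i, 1 ≤ i → ∀ f, mass (L i f) = mass f) →
        (∀ f, mass (L₀ f) = mass f) →
        -- (ML1)
        (∀ i n : ℕ, 1 ≤ n → ∀ f ∈ Bs, nw (opComp L i n f) ≤ M * nw f) →
        (∀ i n : ℕ, 1 ≤ n → ∀ f ∈ Bs,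
          ns (opComp L i n f) ≤ A * lam₁ ^ n * ns f + B * nw f) →
        -- (ML1)-type bounds for `L₀` with the same constants
        (∀ n : ℕ, 1 ≤ n → ∀ f ∈ Bs, nw ((L₀ ^ n) f) ≤ M * nw f) →
        (∀ n : ℕ, 1 ≤ n → ∀ f ∈ Bs,
          ns ((L₀ ^ n) f) ≤ A * lam₁ ^ n * ns f + B * nw f) →
        -- (ML2): `‖L₀ − L_j‖_{B_s→B_w} ≤ ε` for every `j ≥ 1`
        (∀ j, 1 ≤ j → ∀ f ∈ Bs, nw (L₀ f - L j f) ≤ ε * ns f) →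
        -- (ML3): convergence to equilibrium of `L₀` on the zero-average space
        (∀ n : ℕ, 1 ≤ n → ∀ v ∈ Bs, mass v = 0 → nw ((L₀ ^ n) v) ≤ a n * ns v) →
        -- conclusion: exponential loss of memory
        ∀ j n : ℕ, 1 ≤ j → 1 ≤ n → ∀ g ∈ Bs, mass g = 0 →
          ns (opComp L (j - 1) n g) ≤ C * Real.exp (-lam * n) * ns g := by
  have hcoeff : Tendsto (fun n ↦ A * lam₁ ^ n * (A + B) + B * a n) atTop (nhds 0) := by
    simpa using (((tendsto_pow_atTop_nhds_zero_of_lt_one hlam₁0 hlam₁).const_mul A).mul_const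
      (A + B)).add (halim.const_mul B)
  obtain ⟨N, hN, hN1⟩ : ∃ N, A * lam₁ ^ N * (A + B) + B * a N < 4⁻¹ ∧ 1 ≤ N :=
    ((hcoeff.eventually_lt_const (by norm_num)).and (eventually_ge_atTop 1)).exists
  set D := (A + B) * ∑ k ∈ range N, M ^ k
  have hD : 0 ≤ D := by positivity
  refine ⟨(4 * B * (D + 1))⁻¹, by positivity, 2 * (A + B), by linarith,
    Real.log 2 / (N + N : ℕ), by positivity, ?_⟩
  intro L L₀ ε hε hεε₀ hL hL₀ hLmass _ _ hML1s hML1w₀ _ hML2 hML3 j n _ _ g hg hmg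
  have hεD : B * (ε * D) ≤ 4⁻¹ := by
    have := mul_le_mul_of_nonneg_left hεε₀ (by positivity : 0 ≤ 4 * B * (D + 1))
    rw [mul_inv_cancel₀ (by positivity)] at this
    nlinarith
  have hL₀w : ∀ x ∈ Bs, nw (L₀ x) ≤ M * nw x := fun x hx ↦ by
    simpa using hML1w₀ 1 le_rfl x hx
  have hblock : ∀ i, ∀ f ∈ Bs, mass f = 0 → ns (opComp L i (N + N) f) ≤ 2⁻¹ * ns f :=
    fun i f hf hmf ↦ (ns_opComp_add_self_le hwle hL hL₀ hA hB hM hlam₁0 hlam₁.le hε.le hML1s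
      hL₀w hML2 hN1 i hf (hML3 N hN1 f hf hmf)).trans (by gcongr; linarith)
  calc ns (opComp L (j - 1) n g) ≤ (A + B) * 2⁻¹ ^ (n / (N + N)) * ns g :=
        ns_opComp_le_inv_two_pow_div mass hL hLmass (by linarith)
          (ns_opComp_le hwle hA hB hlam₁0 hlam₁.le hML1s) (by omega) hblock n (j - 1) g hg hmg
    _ ≤ (A + B) * (2 * Real.exp (-(Real.log 2 / (N + N : ℕ)) * n)) * ns g := by
        gcongr
        exact inv_two_pow_div_le n (N + N)
    _ = 2 * (A + B) * Real.exp (-(Real.log 2 / (N + N : ℕ)) * n) * ns g := by ring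

/-- Given constants `A, M ≥ 0`, `λ₁ < 1 ≤ B` and a null sequence
`(aₙ)` of nonnegative reals, there exist `ε₀ > 0` and `C, λ > 0` such that every sequence
`{L_i}_{i≥1}` of Markov operators satisfying (ML1) with constants `A, B, M, λ₁`,
(ML2) with some `ε ≤ ε₀` and a Markov operator `L₀` (itself satisfying (ML1)-type bounds
with the same constants), and (ML3) for `L₀` with the sequence `(aₙ)`, has uniform
exponential loss of memory on the zero-average space `V_s`:
`‖L^{(j,j+n−1)} g‖_s ≤ C e^{−λ n} ‖g‖_s` for all `j, n ≥ 1` and `g ∈ V_s`. -/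
theorem exponential_loss_of_memory
    {V : Type*} [AddCommGroup V] [Module ℝ V]
    -- the two norms; the ambient space is `B_w = V`, `B_s` a subspace
    (nw ns : Seminorm ℝ V)
    (Bs : Submodule ℝ V)
    (hwle : ∀ x ∈ Bs, nw x ≤ ns x)
    -- total-mass functional `μ ↦ μ(X)`
    (mass : V →ₗ[ℝ] ℝ)
    -- the constants
    (A B M lam₁ : ℝ) (hA : 0 ≤ A) (hB : 1 ≤ B) (hM : 0 ≤ M)
    (hlam₁0 : 0 ≤ lam₁) (hlam₁ : lam₁ < 1)
    (a : ℕ → ℝ) (ha0 : ∀ n, 0 ≤ a n) (halim : Tendsto a atTop (nhds 0)) :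
    ∃ ε₀ > (0:ℝ), ∃ C > (0:ℝ), ∃ lam > (0:ℝ),
      ∀ (L : ℕ → Module.End ℝ V) (L₀ : Module.End ℝ V) (ε : ℝ),
        0 < ε → ε ≤ ε₀ →
        -- the operators map `B_s` to itself and are Markov (mass preserving)
        (∀ i, 1 ≤ i → ∀ f ∈ Bs, L i f ∈ Bs) →
        (∀ f ∈ Bs, L₀ f ∈ Bs) →
        (∀ i, 1 ≤ i → ∀ f, mass (L i f) = mass f) →
        (∀ f, mass (L₀ f) = mass f) →
        -- (ML1)
        (∀ i n : ℕ, 1 ≤ n → ∀ f ∈ Bs, nw (opComp L i n f) ≤ M * nw f) →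
        (∀ i n : ℕ, 1 ≤ n → ∀ f ∈ Bs,
          ns (opComp L i n f) ≤ A * lam₁ ^ n * ns f + B * nw f) →
        -- (ML1)-type bounds for `L₀` with the same constants
        (∀ n : ℕ, 1 ≤ n → ∀ f ∈ Bs, nw ((L₀ ^ n) f) ≤ M * nw f) →
        (∀ n : ℕ, 1 ≤ n → ∀ f ∈ Bs,
          ns ((L₀ ^ n) f) ≤ A * lam₁ ^ n * ns f + B * nw f) →
        -- (ML2): `‖L₀ − L_j‖_{B_s→B_w} ≤ ε` for every `j ≥ 1`
        (∀ j, 1 ≤ j → ∀ f ∈ Bs, nw (L₀ f - L j f) ≤ ε * ns f) →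
        -- (ML3): convergence to equilibrium of `L₀` on the zero-average space
        (∀ n : ℕ, 1 ≤ n → ∀ v ∈ Bs, mass v = 0 → nw ((L₀ ^ n) v) ≤ a n * ns v) →
        -- conclusion: exponential loss of memory
        ∀ j n : ℕ, 1 ≤ j → 1 ≤ n → ∀ g ∈ Bs, mass g = 0 →
          ns (opComp L (j - 1) n g) ≤ C * Real.exp (-lam * n) * ns g :=
  exponential_loss_of_memory_general nw ns Bs hwle mass A B M lam₁ hA hB hM hlam₁0 hlam₁ a halim
end

section
/- Assume H is not constant and set ρ₋ := min_{𝕋²} ∂₁H, assumed to satisfy ρ₋ < 0. Then for each δ ∈ (0, (σ^{−1}−1)/ρ₋) there exist σ' > 1 and K > 0 such that, for every Borel probability measure μ on 𝕋, the map T_μ := T ∘ Φ_μ satisfies inf_{x∈𝕋} |T_μ'(x)| ≥ σ' and ‖T_μ‖_{C³} ≤ K; in particular T_μ is a uniformly expanding map of the circle. -/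
open MeasureTheory

/-- The mean-field displacement `x ↦ ∫_𝕋 H(x,y) dμ(y)`, where the `1`-periodic function
`H(x,·)` is integrated over the circle `𝕋 = ℝ/ℤ` against the measure `μ`. -/
noncomputable def meanField (H : ℝ → ℝ → ℝ) (μ : Measure (AddCircle (1 : ℝ)))
    (x : ℝ) : ℝ :=
  ∫ y, AddCircle.liftIco 1 0 (H x) y ∂μ

/-- (The lift of) the mean-field coupling map `Φ_μ(x) = x + δ ∫_𝕋 H(x,y) dμ(y)`. -/
noncomputable def couplingMap (H : ℝ → ℝ → ℝ) (δ : ℝ)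
    (μ : Measure (AddCircle (1 : ℝ))) : ℝ → ℝ :=
  fun x => x + δ * meanField H μ x

open Set


-- helper: deriv of a 1-periodic real function is 1-periodic
lemma per_deriv {f : ℝ → ℝ} (h : ∀ x, f (x + 1) = f x) (x : ℝ) :
    deriv f (x + 1) = deriv f x := by
  have hfe : (fun t : ℝ => f (t + 1)) = f := funext h
  rw [← deriv_comp_add_const f 1 x, hfe]

-- helper: continuous doubly-periodic functions on ℝ² are bounded
lemma bdd_of_per2 (f : ℝ × ℝ → ℝ) (hf : Continuous f)
    (h1 : ∀ x y, f (x + 1, y) = f (x, y)) (h2 : ∀ x y, f (x, y + 1) = f (x, y)) :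
    ∃ C, 0 ≤ C ∧ ∀ x y, |f (x, y)| ≤ C := by
  obtain ⟨C, hC⟩ := (isCompact_Icc.prod isCompact_Icc :
      IsCompact (Icc (0:ℝ) 1 ×ˢ Icc (0:ℝ) 1)).exists_bound_of_continuousOn hf.continuousOn
  refine ⟨max C 0, le_max_right _ _, fun x y => ?_⟩
  have hpx : ∀ y, Function.Periodic (fun x => f (x, y)) 1 := fun y x => h1 x y
  have hpy : ∀ x, Function.Periodic (fun y => f (x, y)) 1 := fun x y => h2 x y
  have e1 : f (x, y) = f (Int.fract x, Int.fract y) := by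
    have a1 : f (x - (⌊x⌋ : ℝ) * 1, y) = f (x, y) := (hpx y).sub_int_mul_eq ⌊x⌋
    have a2 : f (Int.fract x, y - (⌊y⌋ : ℝ) * 1) = f (Int.fract x, y) :=
      (hpy (Int.fract x)).sub_int_mul_eq ⌊y⌋
    simp only [Int.fract, mul_one] at a1 a2 ⊢
    rw [a2, a1]
  rw [e1]
  refine le_trans ?_ (le_max_left C 0)
  have := hC (Int.fract x, Int.fract y) ⟨⟨Int.fract_nonneg x, le_of_lt (Int.fract_lt_one x)⟩,
    ⟨Int.fract_nonneg y, le_of_lt (Int.fract_lt_one y)⟩⟩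
  simpa using this

-- helper: |a*b| ≤ A*B
lemma abs_mul_le {a b A B : ℝ} (ha : |a| ≤ A) (hb : |b| ≤ B) : |a * b| ≤ A * B := by
  rw [abs_mul]
  exact mul_le_mul ha hb (abs_nonneg b) (le_trans (abs_nonneg a) ha)


set_option maxHeartbeats 1000000 in
/-- If `H` is not constant, `ρ₋ := min_{𝕋²} ∂₁H < 0`, `T` is a `C⁴`
circle map (given by its lift `τ`) with `|T'| > σ > 1`, then for each
`δ ∈ (0, (σ⁻¹−1)/ρ₋)` there are `σ' > 1` and `K > 0` such that for every Borel
probability measure `μ` on `𝕋` the map `T_μ = T ∘ Φ_μ` satisfies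
`inf |T_μ'| ≥ σ' > 1` and `‖T_μ‖_{C³} ≤ K`; in particular `T_μ` is uniformly expanding. -/
theorem coupled_map_uniformly_expanding
    -- the uncoupled map `T`, via a lift `τ` of a circle map of some degree `m`
    (τ : ℝ → ℝ) (hτ : ContDiff ℝ 4 τ)
    (m : ℤ) (hτlift : ∀ x, τ (x + 1) = τ x + m)
    (σ : ℝ) (hσ : 1 < σ) (hexp : ∀ x, σ < |deriv τ x|)
    -- the interaction `H`, `C⁴` and `1`-periodic in each variable, not constant
    (H : ℝ → ℝ → ℝ) (hH : ContDiff ℝ 4 (Function.uncurry H))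
    (hper1 : ∀ x y, H (x + 1) y = H x y)
    (hper2 : ∀ x y, H x (y + 1) = H x y)
    (hHnonconst : ∃ x y x' y', H x y ≠ H x' y')
    -- `ρ₋ = min_{𝕋²} ∂₁H < 0`
    (ρ : ℝ) (hρneg : ρ < 0)
    (hρle : ∀ x y, ρ ≤ deriv (fun t => H t y) x)
    (hρmin : ∃ x y, deriv (fun t => H t y) x = ρ)
    -- the coupling strength
    (δ : ℝ) (hδ0 : 0 < δ) (hδ : δ < (σ⁻¹ - 1) / ρ) :
    ∃ σ' > (1:ℝ), ∃ K > (0:ℝ),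
      ∀ μ : Measure (AddCircle (1 : ℝ)), IsProbabilityMeasure μ →
        (∀ x, σ' ≤ |deriv (τ ∘ couplingMap H δ μ) x|)
        -- the `C³` bound `‖T_μ‖_{C³} ≤ K`
        ∧ (∀ x ∈ Set.Icc (0:ℝ) 1, |(τ ∘ couplingMap H δ μ) x| ≤ K)
        ∧ (∀ x, |deriv (τ ∘ couplingMap H δ μ) x| ≤ K)
        ∧ (∀ x, |iteratedDeriv 2 (τ ∘ couplingMap H δ μ) x| ≤ K)
        ∧ (∀ x, |iteratedDeriv 3 (τ ∘ couplingMap H δ μ) x| ≤ K) := by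
  classical
  -- abbreviation for the uncurried interaction
  set U : ℝ × ℝ → ℝ := Function.uncurry H with hUdef
  have hUc : Continuous U := hH.continuous
  have hUdiff : Differentiable ℝ U := hH.differentiable (by norm_num)
  -- generic directional-derivative lemma
  have hkey : ∀ (F : ℝ × ℝ → ℝ), Differentiable ℝ F → ∀ x y,
      HasDerivAt (fun t => F (t, y)) (fderiv ℝ F (x, y) (1, 0)) x := by
    intro F hF x y
    have h1 : HasDerivAt (fun t : ℝ => (t, y)) ((1:ℝ), (0:ℝ)) x :=
      HasDerivAt.prodMk (hasDerivAt_id x) (hasDerivAt_const x y)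
    have := (hF (x, y)).hasFDerivAt.comp_hasDerivAt x h1
    exact this
  -- successive partial derivatives in the first variable
  set P1 : ℝ × ℝ → ℝ := fun p => fderiv ℝ U p (1, 0) with hP1def
  have hP1 : ContDiff ℝ 3 P1 := (hH.fderiv_right (by norm_num)).clm_apply contDiff_const
  set P2 : ℝ × ℝ → ℝ := fun p => fderiv ℝ P1 p (1, 0) with hP2def
  have hP2 : ContDiff ℝ 2 P2 := (hP1.fderiv_right (by norm_num)).clm_apply contDiff_const
  set P3 : ℝ × ℝ → ℝ := fun p => fderiv ℝ P2 p (1, 0) with hP3def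
  have hP3 : ContDiff ℝ 1 P3 := (hP2.fderiv_right (by norm_num)).clm_apply contDiff_const
  have hP1diff : Differentiable ℝ P1 := hP1.differentiable (by norm_num)
  have hP2diff : Differentiable ℝ P2 := hP2.differentiable (by norm_num)
  have k0 : ∀ x y, HasDerivAt (fun t => U (t, y)) (P1 (x, y)) x := fun x y => hkey U hUdiff x y
  have k1 : ∀ x y, HasDerivAt (fun t => P1 (t, y)) (P2 (x, y)) x := fun x y => hkey P1 hP1diff x y
  have k2 : ∀ x y, HasDerivAt (fun t => P2 (t, y)) (P3 (x, y)) x := fun x y => hkey P2 hP2diff x y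
  have dP1 : ∀ x y, P1 (x, y) = deriv (fun t => H t y) x := by
    intro x y
    have := (k0 x y).deriv
    simpa [hUdef, Function.uncurry] using this.symm
  -- periodicity of everything
  have hU1 : ∀ x y, U (x + 1, y) = U (x, y) := fun x y => hper1 x y
  have hU2 : ∀ x y, U (x, y + 1) = U (x, y) := fun x y => hper2 x y
  have p1x : ∀ x y, P1 (x + 1, y) = P1 (x, y) := by
    intro x y
    rw [dP1, dP1]
    exact per_deriv (fun x => hper1 x y) x
  have p1y : ∀ x y, P1 (x, y + 1) = P1 (x, y) := by
    intro x y; rw [dP1, dP1]; simp only [hper2]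
  have dP2 : ∀ x y, P2 (x, y) = deriv (fun t => P1 (t, y)) x := fun x y => ((k1 x y).deriv).symm
  have p2x : ∀ x y, P2 (x + 1, y) = P2 (x, y) := by
    intro x y; rw [dP2, dP2]; exact per_deriv (fun x => p1x x y) x
  have p2y : ∀ x y, P2 (x, y + 1) = P2 (x, y) := by
    intro x y; rw [dP2, dP2]; simp only [p1y]
  have dP3 : ∀ x y, P3 (x, y) = deriv (fun t => P2 (t, y)) x := fun x y => ((k2 x y).deriv).symm
  have p3x : ∀ x y, P3 (x + 1, y) = P3 (x, y) := by
    intro x y; rw [dP3, dP3]; exact per_deriv (fun x => p2x x y) x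
  have p3y : ∀ x y, P3 (x, y + 1) = P3 (x, y) := by
    intro x y; rw [dP3, dP3]; simp only [p2y]
  -- uniform bounds
  obtain ⟨C0, hC0nn, hC0⟩ := bdd_of_per2 U hUc hU1 hU2
  obtain ⟨C1, hC1nn, hC1⟩ := bdd_of_per2 P1 hP1.continuous p1x p1y
  obtain ⟨C2, hC2nn, hC2⟩ := bdd_of_per2 P2 hP2.continuous p2x p2y
  obtain ⟨C3, hC3nn, hC3⟩ := bdd_of_per2 P3 hP3.continuous p3x p3y
  -- derivatives of τ
  have hτ4 : ContDiff ℝ ((3:WithTop ℕ∞) + 1) τ := by exact_mod_cast hτ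
  obtain ⟨hτd, -, hτ1c⟩ := contDiff_succ_iff_deriv.mp hτ4
  have hτ1c' : ContDiff ℝ ((2:WithTop ℕ∞) + 1) (deriv τ) := by exact_mod_cast hτ1c
  obtain ⟨hτ1d, -, hτ2c⟩ := contDiff_succ_iff_deriv.mp hτ1c'
  have hτ2c' : ContDiff ℝ ((1:WithTop ℕ∞) + 1) (deriv (deriv τ)) := by exact_mod_cast hτ2c
  obtain ⟨hτ2d, -, hτ3c⟩ := contDiff_succ_iff_deriv.mp hτ2c'
  -- periodicity of the derivatives of τ
  have pτ1 : ∀ x, deriv τ (x + 1) = deriv τ x := by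
    intro x
    rw [← deriv_comp_add_const τ 1 x]
    have he : (fun t : ℝ => τ (t + 1)) = fun t => τ t + (m:ℝ) := funext hτlift
    rw [he, deriv_add_const]
  have pτ2 : ∀ x, deriv (deriv τ) (x + 1) = deriv (deriv τ) x := fun x => per_deriv pτ1 x
  have pτ3 : ∀ x, deriv (deriv (deriv τ)) (x + 1) = deriv (deriv (deriv τ)) x :=
    fun x => per_deriv pτ2 x
  -- bounds on the derivatives of τ
  obtain ⟨B1, hB1nn, hB1⟩ := bdd_of_per2 (fun p => deriv τ p.1)
    (hτ1c.continuous.comp continuous_fst) (fun x y => pτ1 x) (fun x y => rfl)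
  obtain ⟨B2, hB2nn, hB2⟩ := bdd_of_per2 (fun p => deriv (deriv τ) p.1)
    (hτ2c.continuous.comp continuous_fst) (fun x y => pτ2 x) (fun x y => rfl)
  obtain ⟨B3, hB3nn, hB3⟩ := bdd_of_per2 (fun p => deriv (deriv (deriv τ)) p.1)
    (hτ3c.continuous.comp continuous_fst) (fun x y => pτ3 x) (fun x y => rfl)
  set B : ℝ := max B1 (max B2 B3) with hBdef
  have hBnn : 0 ≤ B := le_trans hB1nn (le_max_left _ _)
  have hBτ1 : ∀ z, |deriv τ z| ≤ B := fun z => le_trans (hB1 z 0) (le_max_left _ _)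
  have hBτ2 : ∀ z, |deriv (deriv τ) z| ≤ B :=
    fun z => le_trans (hB2 z 0) (le_trans (le_max_left _ _) (le_max_right _ _))
  have hBτ3 : ∀ z, |deriv (deriv (deriv τ)) z| ≤ B :=
    fun z => le_trans (hB3 z 0) (le_trans (le_max_right _ _) (le_max_right _ _))
  -- bound on τ itself on the relevant compact interval
  obtain ⟨B0, hB0⟩ := (isCompact_Icc :
      IsCompact (Set.Icc (-(1 + δ * C0)) (1 + δ * C0))).exists_bound_of_continuousOn
    hτ.continuous.continuousOn
  -- the constants
  set A : ℝ := 1 + δ * C1 with hAdef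
  have hAnn : (0:ℝ) ≤ A := by
    have : 0 ≤ δ * C1 := mul_nonneg hδ0.le hC1nn
    simp [hAdef]; linarith
  set K : ℝ := max B0 0 + B * A + ((B * A) * A + B * (δ * C2)) +
      ((((B * A) * A + B * (δ * C2)) * A + (B * A) * (δ * C2)) +
        ((B * A) * (δ * C2) + B * (δ * C3))) + 1 with hKdef
  -- nonnegativity facts
  have t0 : (0:ℝ) ≤ max B0 0 := le_max_right _ _
  have t1 : 0 ≤ B * A := mul_nonneg hBnn hAnn
  have t2 : 0 ≤ (B * A) * A := mul_nonneg t1 hAnn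
  have tc2 : 0 ≤ δ * C2 := mul_nonneg hδ0.le hC2nn
  have tc3 : 0 ≤ δ * C3 := mul_nonneg hδ0.le hC3nn
  have t3 : 0 ≤ B * (δ * C2) := mul_nonneg hBnn tc2
  have t4 : 0 ≤ (B * A) * (δ * C2) := mul_nonneg t1 tc2
  have t5 : 0 ≤ B * (δ * C3) := mul_nonneg hBnn tc3
  have t6 : 0 ≤ ((B * A) * A + B * (δ * C2)) * A := mul_nonneg (by linarith) hAnn
  have hK0 : 0 < K := by rw [hKdef]; linarith
  -- the expansion constant
  have hσ0 : (0:ℝ) < σ := lt_trans one_pos hσ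
  have hρδ : σ⁻¹ < 1 + δ * ρ := by
    have h2 : ((σ⁻¹ - 1) / ρ) * ρ < δ * ρ := by
      exact mul_lt_mul_of_neg_right hδ hρneg
    rw [div_mul_cancel₀ _ (ne_of_lt hρneg)] at h2
    linarith
  have hinvpos : (0:ℝ) < σ⁻¹ := inv_pos.mpr hσ0
  have hσ'1 : 1 < σ * (1 + δ * ρ) := by
    have hmul : σ * σ⁻¹ = 1 := mul_inv_cancel₀ (ne_of_gt hσ0)
    nlinarith [mul_pos hσ0 (sub_pos.mpr hρδ)]
  refine ⟨σ * (1 + δ * ρ), hσ'1, K, hK0, ?_⟩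
  intro μ hμ
  haveI := hμ
  -- the quotient-representative map
  set g : AddCircle (1:ℝ) → ℝ := fun y => (AddCircle.equivIco 1 0 y : ℝ) with hgdef
  have hg : Measurable g :=
    measurable_subtype_coe.comp (AddCircle.measurableEquivIco (T := (1:ℝ)) 0).measurable
  -- integrability of the integrands
  have hint : ∀ (F : ℝ × ℝ → ℝ), Continuous F → ∀ (C : ℝ), (∀ a b, |F (a, b)| ≤ C) →
      ∀ x, Integrable (fun y => F (x, g y)) μ := by
    intro F hF C hC x
    have hm : AEStronglyMeasurable (fun y => F (x, g y)) μ :=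
      (hF.measurable.comp (measurable_const.prodMk hg)).aestronglyMeasurable
    exact (integrable_const C).mono' hm
      (Filter.Eventually.of_forall fun y => by simpa using hC x (g y))
  -- differentiation under the integral sign
  have hund : ∀ (F G : ℝ × ℝ → ℝ), Continuous F → Continuous G →
      ∀ (CF CG : ℝ), (∀ a b, |F (a, b)| ≤ CF) → (∀ a b, |G (a, b)| ≤ CG) →
      (∀ a b, HasDerivAt (fun t => F (t, b)) (G (a, b)) a) →
      ∀ x, HasDerivAt (fun x => ∫ y, F (x, g y) ∂μ) (∫ y, G (x, g y) ∂μ) x := by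
    intro F G hFc hGc CF CG hCF hCG hFG x
    have h := hasDerivAt_integral_of_dominated_loc_of_deriv_le
      (F := fun x y => F (x, g y)) (F' := fun x y => G (x, g y))
      (bound := fun _ => CG) (μ := μ) (x₀ := x) (s := Metric.ball x 1) (Metric.ball_mem_nhds x one_pos)
      (Filter.Eventually.of_forall fun x' =>
        (hFc.measurable.comp (measurable_const.prodMk hg)).aestronglyMeasurable)
      (hint F hFc CF hCF x)
      ((hGc.measurable.comp (measurable_const.prodMk hg)).aestronglyMeasurable)
      (Filter.Eventually.of_forall fun y x' _ => by simpa using hCG x' (g y))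
      (integrable_const CG)
      (Filter.Eventually.of_forall fun y x' _ => hFG x' (g y))
    exact h.2
  -- bounds on the integrals
  have bM : ∀ (F : ℝ × ℝ → ℝ) (C : ℝ), (∀ a b, |F (a, b)| ≤ C) →
      ∀ x, |∫ y, F (x, g y) ∂μ| ≤ C := by
    intro F C hC x
    have h := norm_integral_le_of_norm_le_const (μ := μ) (f := fun y => F (x, g y)) (C := C)
      (Filter.Eventually.of_forall fun y => by simpa using hC x (g y))
    simpa [measure_univ] using h
  -- the mean-field integrals
  have hmf : meanField H μ = fun x => ∫ y, U (x, g y) ∂μ := rfl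
  set M1 : ℝ → ℝ := fun x => ∫ y, P1 (x, g y) ∂μ with hM1def
  set M2 : ℝ → ℝ := fun x => ∫ y, P2 (x, g y) ∂μ with hM2def
  set M3 : ℝ → ℝ := fun x => ∫ y, P3 (x, g y) ∂μ with hM3def
  have hM0' : ∀ x, HasDerivAt (meanField H μ) (M1 x) x := by
    intro x
    rw [hmf]
    exact hund U P1 hUc hP1.continuous C0 C1 hC0 hC1 (fun a b => k0 a b) x
  have hM1' : ∀ x, HasDerivAt M1 (M2 x) x := fun x =>
    hund P1 P2 hP1.continuous hP2.continuous C1 C2 hC1 hC2 (fun a b => k1 a b) x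
  have hM2' : ∀ x, HasDerivAt M2 (M3 x) x := fun x =>
    hund P2 P3 hP2.continuous hP3.continuous C2 C3 hC2 hC3 (fun a b => k2 a b) x
  have hM0b : ∀ x, |meanField H μ x| ≤ C0 := by
    intro x; rw [hmf]; exact bM U C0 hC0 x
  have hM1b : ∀ x, |M1 x| ≤ C1 := fun x => bM P1 C1 hC1 x
  have hM2b : ∀ x, |M2 x| ≤ C2 := fun x => bM P2 C2 hC2 x
  have hM3b : ∀ x, |M3 x| ≤ C3 := fun x => bM P3 C3 hC3 x
  have hρM1 : ∀ x, ρ ≤ M1 x := by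
    intro x
    have h1 : ∀ y, ρ ≤ P1 (x, g y) := fun y => by rw [dP1]; exact hρle x (g y)
    have h2 : (∫ (_ : AddCircle (1:ℝ)), ρ ∂μ) = ρ := by simp [measure_univ]
    calc ρ = ∫ (_ : AddCircle (1:ℝ)), ρ ∂μ := h2.symm
    _ ≤ M1 x := integral_mono (integrable_const ρ)
        (hint P1 hP1.continuous C1 hC1 x) h1
  -- the coupling map and its derivatives
  have hΦ' : ∀ x, HasDerivAt (couplingMap H δ μ) (1 + δ * M1 x) x := by
    intro x
    have := (hasDerivAt_id x).add ((hM0' x).const_mul δ)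
    exact this
  have hΦ1b : ∀ x, |1 + δ * M1 x| ≤ A := by
    intro x
    calc |1 + δ * M1 x| ≤ |(1:ℝ)| + |δ * M1 x| := abs_add_le _ _
    _ = 1 + δ * |M1 x| := by rw [abs_one, abs_mul, abs_of_pos hδ0]
    _ ≤ A := by rw [hAdef]; have := hM1b x; nlinarith
  have hΦ1lb : ∀ x, 1 + δ * ρ ≤ 1 + δ * M1 x := by
    intro x
    have := hρM1 x
    nlinarith
  have hΦ1pos : ∀ x, 0 < 1 + δ * M1 x := fun x => lt_of_lt_of_le
    (lt_trans hinvpos hρδ) (hΦ1lb x)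
  -- derivative of the composition
  have hψ' : ∀ x, HasDerivAt (τ ∘ couplingMap H δ μ)
      (deriv τ (couplingMap H δ μ x) * (1 + δ * M1 x)) x := fun x =>
    ((hτd (couplingMap H δ μ x)).hasDerivAt).comp x (hΦ' x)
  have hψderiv : deriv (τ ∘ couplingMap H δ μ) =
      fun x => deriv τ (couplingMap H δ μ x) * (1 + δ * M1 x) :=
    funext fun x => (hψ' x).deriv
  -- second derivative
  have hE1' : ∀ x, HasDerivAt (fun x => deriv τ (couplingMap H δ μ x) * (1 + δ * M1 x))
      ((deriv (deriv τ) (couplingMap H δ μ x) * (1 + δ * M1 x)) * (1 + δ * M1 x) +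
        deriv τ (couplingMap H δ μ x) * (0 + δ * M2 x)) x := by
    intro x
    exact (((hτ1d (couplingMap H δ μ x)).hasDerivAt).comp x (hΦ' x)).mul
      ((hasDerivAt_const x (1:ℝ)).add ((hM1' x).const_mul δ))
  have h2eq : iteratedDeriv 2 (τ ∘ couplingMap H δ μ) =
      fun x => (deriv (deriv τ) (couplingMap H δ μ x) * (1 + δ * M1 x)) * (1 + δ * M1 x) +
        deriv τ (couplingMap H δ μ x) * (0 + δ * M2 x) := by
    rw [iteratedDeriv_succ, iteratedDeriv_one, hψderiv]
    exact funext fun x => (hE1' x).deriv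
  -- third derivative
  have hE2' : ∀ x, HasDerivAt
      (fun x => (deriv (deriv τ) (couplingMap H δ μ x) * (1 + δ * M1 x)) * (1 + δ * M1 x) +
        deriv τ (couplingMap H δ μ x) * (0 + δ * M2 x))
      ((((deriv (deriv (deriv τ)) (couplingMap H δ μ x) * (1 + δ * M1 x)) * (1 + δ * M1 x) +
          deriv (deriv τ) (couplingMap H δ μ x) * (0 + δ * M2 x)) * (1 + δ * M1 x) +
         (deriv (deriv τ) (couplingMap H δ μ x) * (1 + δ * M1 x)) * (0 + δ * M2 x)) +
        ((deriv (deriv τ) (couplingMap H δ μ x) * (1 + δ * M1 x)) * (0 + δ * M2 x) +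
          deriv τ (couplingMap H δ μ x) * (0 + δ * M3 x))) x := by
    intro x
    have hΦ1d : HasDerivAt (fun x => 1 + δ * M1 x) (0 + δ * M2 x) x :=
      (hasDerivAt_const x (1:ℝ)).add ((hM1' x).const_mul δ)
    have hM2d : HasDerivAt (fun x => 0 + δ * M2 x) (0 + δ * M3 x) x :=
      (hasDerivAt_const x (0:ℝ)).add ((hM2' x).const_mul δ)
    exact (((((hτ2d (couplingMap H δ μ x)).hasDerivAt).comp x (hΦ' x)).mul hΦ1d).mul hΦ1d).add
      (((((hτ1d (couplingMap H δ μ x)).hasDerivAt).comp x (hΦ' x))).mul hM2d)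
  have h3eq : ∀ x, iteratedDeriv 3 (τ ∘ couplingMap H δ μ) x =
      (((deriv (deriv (deriv τ)) (couplingMap H δ μ x) * (1 + δ * M1 x)) * (1 + δ * M1 x) +
          deriv (deriv τ) (couplingMap H δ μ x) * (0 + δ * M2 x)) * (1 + δ * M1 x) +
         (deriv (deriv τ) (couplingMap H δ μ x) * (1 + δ * M1 x)) * (0 + δ * M2 x)) +
        ((deriv (deriv τ) (couplingMap H δ μ x) * (1 + δ * M1 x)) * (0 + δ * M2 x) +
          deriv τ (couplingMap H δ μ x) * (0 + δ * M3 x)) := by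
    intro x
    rw [show (3:ℕ) = 2 + 1 from rfl, iteratedDeriv_succ, h2eq]
    exact (hE2' x).deriv
  -- auxiliary bounds
  have habs2 : ∀ x, |0 + δ * M2 x| ≤ δ * C2 := by
    intro x
    rw [zero_add, abs_mul, abs_of_pos hδ0]
    exact mul_le_mul_of_nonneg_left (hM2b x) hδ0.le
  have habs3 : ∀ x, |0 + δ * M3 x| ≤ δ * C3 := by
    intro x
    rw [zero_add, abs_mul, abs_of_pos hδ0]
    exact mul_le_mul_of_nonneg_left (hM3b x) hδ0.le
  refine ⟨?_, ?_, ?_, ?_, ?_⟩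
  · -- expansion
    intro x
    rw [hψderiv, abs_mul]
    have h1 : σ ≤ |deriv τ (couplingMap H δ μ x)| := (hexp _).le
    have h2 : 1 + δ * ρ ≤ |1 + δ * M1 x| := by
      rw [abs_of_pos (hΦ1pos x)]; exact hΦ1lb x
    exact mul_le_mul h1 h2 (le_trans (lt_trans hinvpos hρδ).le (le_refl _)) (abs_nonneg _)
  · -- C⁰ bound
    intro x hx
    have hΦb : |couplingMap H δ μ x| ≤ 1 + δ * C0 := by
      have h1 : |x| ≤ 1 := by
        rw [abs_le]; exact ⟨by linarith [hx.1], hx.2⟩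
      calc |couplingMap H δ μ x| = |x + δ * meanField H μ x| := rfl
      _ ≤ |x| + |δ * meanField H μ x| := abs_add_le _ _
      _ ≤ 1 + δ * C0 := by
          rw [abs_mul, abs_of_pos hδ0]
          have := hM0b x
          nlinarith
    have hmem : couplingMap H δ μ x ∈ Set.Icc (-(1 + δ * C0)) (1 + δ * C0) := by
      rw [Set.mem_Icc, ← abs_le]; exact hΦb
    have := hB0 _ hmem
    have hτb : |τ (couplingMap H δ μ x)| ≤ max B0 0 := le_trans (by simpa using this)
      (le_max_left _ _)
    calc |(τ ∘ couplingMap H δ μ) x| = |τ (couplingMap H δ μ x)| := rfl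
    _ ≤ max B0 0 := hτb
    _ ≤ K := by rw [hKdef]; linarith
  · -- C¹ bound
    intro x
    rw [hψderiv]
    have := abs_mul_le (hBτ1 (couplingMap H δ μ x)) (hΦ1b x)
    calc |deriv τ (couplingMap H δ μ x) * (1 + δ * M1 x)| ≤ B * A := this
    _ ≤ K := by rw [hKdef]; linarith
  · -- C² bound
    intro x
    rw [h2eq]
    have h1 : |(deriv (deriv τ) (couplingMap H δ μ x) * (1 + δ * M1 x)) * (1 + δ * M1 x)| ≤
        (B * A) * A := abs_mul_le (abs_mul_le (hBτ2 _) (hΦ1b x)) (hΦ1b x)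
    have h2 : |deriv τ (couplingMap H δ μ x) * (0 + δ * M2 x)| ≤ B * (δ * C2) :=
      abs_mul_le (hBτ1 _) (habs2 x)
    calc |(deriv (deriv τ) (couplingMap H δ μ x) * (1 + δ * M1 x)) * (1 + δ * M1 x) +
        deriv τ (couplingMap H δ μ x) * (0 + δ * M2 x)|
        ≤ (B * A) * A + B * (δ * C2) := le_trans (abs_add_le _ _) (by linarith)
    _ ≤ K := by rw [hKdef]; linarith
  · -- C³ bound
    intro x
    rw [h3eq]
    have hbb : |deriv (deriv τ) (couplingMap H δ μ x) * (1 + δ * M1 x)| ≤ B * A :=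
      abs_mul_le (hBτ2 _) (hΦ1b x)
    have h1 : |((deriv (deriv (deriv τ)) (couplingMap H δ μ x) * (1 + δ * M1 x)) * (1 + δ * M1 x) +
        deriv (deriv τ) (couplingMap H δ μ x) * (0 + δ * M2 x)) * (1 + δ * M1 x)| ≤
        ((B * A) * A + B * (δ * C2)) * A := by
      refine abs_mul_le (le_trans (abs_add_le _ _) ?_) (hΦ1b x)
      linarith [abs_mul_le (abs_mul_le (hBτ3 (couplingMap H δ μ x)) (hΦ1b x)) (hΦ1b x),
        abs_mul_le (hBτ2 (couplingMap H δ μ x)) (habs2 x)]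
    have h2 : |(deriv (deriv τ) (couplingMap H δ μ x) * (1 + δ * M1 x)) * (0 + δ * M2 x)| ≤
        (B * A) * (δ * C2) := abs_mul_le hbb (habs2 x)
    have h3 : |deriv τ (couplingMap H δ μ x) * (0 + δ * M3 x)| ≤ B * (δ * C3) :=
      abs_mul_le (hBτ1 _) (habs3 x)
    have := abs_add_le ((deriv (deriv (deriv τ)) (couplingMap H δ μ x) * (1 + δ * M1 x)) *
        (1 + δ * M1 x) + deriv (deriv τ) (couplingMap H δ μ x) * (0 + δ * M2 x)) 0
    calc |(((deriv (deriv (deriv τ)) (couplingMap H δ μ x) * (1 + δ * M1 x)) * (1 + δ * M1 x) +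
          deriv (deriv τ) (couplingMap H δ μ x) * (0 + δ * M2 x)) * (1 + δ * M1 x) +
         (deriv (deriv τ) (couplingMap H δ μ x) * (1 + δ * M1 x)) * (0 + δ * M2 x)) +
        ((deriv (deriv τ) (couplingMap H δ μ x) * (1 + δ * M1 x)) * (0 + δ * M2 x) +
          deriv τ (couplingMap H δ μ x) * (0 + δ * M3 x))|
        ≤ (((B * A) * A + B * (δ * C2)) * A + (B * A) * (δ * C2)) +
          ((B * A) * (δ * C2) + B * (δ * C3)) := by
          refine le_trans (abs_add_le _ _) ?_
          have ha := le_trans (abs_add_le _ _) (add_le_add h1 h2)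
          have hb := le_trans (abs_add_le _ _) (add_le_add h2 h3)
          linarith
    _ ≤ K := by rw [hKdef]; linarith
end

section
/- Let k ≥ 2 be an integer, δ ≥ 0 and H : ℝ → ℝ continuous and 1-periodic. Then the constant density 1 is a fixed point of 𝓛_δ, and for every continuously differentiable 1-periodic probability density η (i.e. η ≥ 0 with ∫₀¹ η = 1) and every n ∈ ℕ, 𝓛_δⁿ(η) is a continuously differentiable 1-periodic probability density satisfying ∫₀¹ |(𝓛_δⁿη)'(x)| dx ≤ k^{−n} ∫₀¹ |η'(x)| dx and ∫₀¹ |𝓛_δⁿη(x) − 1| dx + ∫₀¹ |(𝓛_δⁿη)'(x)| dx ≤ 2 k^{−n} ∫₀¹ |η'(x)| dx; in particular, for every coupling strength δ ≥ 0, every such density converges exponentially fast to the constant density 1 in the W^{1,1}-norm. -/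
open MeasureTheory intervalIntegral

/-- The transfer operator of the expanding map `T(x) = kx mod 1`, acting on densities
(identified with `1`-periodic functions on `ℝ`):
`(T_*η)(x) = (1/k) Σ_{i=0}^{k−1} η((x+i)/k)`. -/
noncomputable def transferOp (k : ℕ) (η : ℝ → ℝ) : ℝ → ℝ :=
  fun x => (1 / (k : ℝ)) * ∑ i ∈ Finset.range k, η ((x + i) / k)

/-- The translation (coupling) operator `(Λ_c η)(x) = η(x − c)`. -/
def translateOp (c : ℝ) (η : ℝ → ℝ) : ℝ → ℝ := fun x => η (x - c)

/-- The self-consistent transfer operator with deterministic mean-field coupling: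
`𝓛_δ(η) = T_*(Λ_{c(η)} η)` with `c(η) = δ ∫₀¹ H(y) η(y) dy`. -/
noncomputable def selfConsistentOp (k : ℕ) (δ : ℝ) (H : ℝ → ℝ) (η : ℝ → ℝ) : ℝ → ℝ :=
  transferOp k (translateOp (δ * ∫ y in (0:ℝ)..1, H y * η y) η)

lemma periodic_deriv' {f : ℝ → ℝ} (h : Function.Periodic f 1) :
    Function.Periodic (deriv f) 1 := by
  intro x
  have hf : (fun y => f (y + 1)) = f := funext h
  calc deriv f (x + 1) = deriv (fun y => f (y + 1)) x := (deriv_comp_add_const f 1 x).symm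
  _ = deriv f x := by rw [hf]

lemma periodic_int {f : ℝ → ℝ} (h : Function.Periodic f 1) (t : ℝ) :
    ∫ x in t..(t+1), f x = ∫ x in (0:ℝ)..1, f x := by
  simpa using h.intervalIntegral_add_eq t 0

lemma integral_translate {f : ℝ → ℝ} (hper : Function.Periodic f 1) (c : ℝ) :
    ∫ x in (0:ℝ)..1, f (x - c) = ∫ x in (0:ℝ)..1, f x := by
  rw [intervalIntegral.integral_comp_sub_right f c]
  have := periodic_int hper (0 - c)
  rw [show (0:ℝ) - c = -c by ring, show (-c:ℝ) + 1 = 1 - c by ring] at this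
  simpa using this

lemma translate_contDiff {η : ℝ → ℝ} (h : ContDiff ℝ 1 η) (c : ℝ) :
    ContDiff ℝ 1 (translateOp c η) := h.comp (contDiff_id.sub contDiff_const)

lemma translate_periodic {η : ℝ → ℝ} (h : Function.Periodic η 1) (c : ℝ) :
    Function.Periodic (translateOp c η) 1 := by
  intro x
  simp only [translateOp]
  rw [add_sub_right_comm]
  exact h (x - c)

lemma translate_deriv {η : ℝ → ℝ} (c x : ℝ) :
    deriv (translateOp c η) x = deriv η (x - c) := deriv_comp_sub_const η c x

section transfer
variable {k : ℕ}

lemma transfer_contDiff (hk : 2 ≤ k) {η : ℝ → ℝ} (h : ContDiff ℝ 1 η) :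
    ContDiff ℝ 1 (transferOp k η) := by
  unfold transferOp
  exact contDiff_const.mul (ContDiff.sum fun i _ =>
    h.comp ((contDiff_id.add contDiff_const).div_const (k:ℝ)))

lemma transfer_periodic (hk : 2 ≤ k) {η : ℝ → ℝ} (h : Function.Periodic η 1) :
    Function.Periodic (transferOp k η) 1 := by
  have hk0 : (k:ℝ) ≠ 0 := by positivity
  intro x
  unfold transferOp
  congr 1
  have key : ∀ i : ℕ, η ((x + 1 + i) / k) = η ((x + (i+1:ℕ)) / k) := by
    intro i; push_cast; ring_nf
  calc ∑ i ∈ Finset.range k, η ((x + 1 + i) / k)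
      = ∑ i ∈ Finset.range k, η ((x + (i+1:ℕ)) / k) := by
        exact Finset.sum_congr rfl fun i _ => key i
    _ = (∑ i ∈ Finset.range (k+1), η ((x + i) / k)) - η ((x + (0:ℕ)) / k) := by
        rw [Finset.sum_range_succ' (fun i : ℕ => η ((x + i) / k)) k]; ring
    _ = ∑ i ∈ Finset.range k, η ((x + i) / k) := by
        rw [Finset.sum_range_succ]
        have : ((x + (k:ℕ)) / k : ℝ) = x / k + 1 := by
          push_cast; field_simp
        rw [this, h (x / (k:ℝ))]
        have h0 : η (x / (k:ℝ)) = η ((x + (0:ℕ)) / k) := by norm_num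
        rw [h0]; ring
end transfer

section transfer2
variable {k : ℕ}

lemma transfer_hasDerivAt (hk : 2 ≤ k) {η : ℝ → ℝ} (h : ContDiff ℝ 1 η) (x : ℝ) :
    HasDerivAt (transferOp k η)
      ((1/(k:ℝ)) * ∑ i ∈ Finset.range k, (1/(k:ℝ)) * deriv η ((x + i)/k)) x := by
  have hterm : ∀ i ∈ Finset.range k,
      HasDerivAt (fun y : ℝ => η ((y + (i:ℝ))/k)) ((1/(k:ℝ)) * deriv η ((x+i)/k)) x := by
    intro i _
    have h1 : HasDerivAt (fun y : ℝ => (y + (i:ℝ))/k) (1/(k:ℝ)) x := by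
      simpa using ((hasDerivAt_id x).add_const (i:ℝ)).div_const (k:ℝ)
    have h2 : HasDerivAt η (deriv η ((x+i)/k)) ((x+i)/k) :=
      ((h.differentiable one_ne_zero) _).hasDerivAt
    simpa [mul_comm, Function.comp_def] using h2.comp x h1
  have := (HasDerivAt.fun_sum hterm).const_mul (1/(k:ℝ))
  unfold transferOp
  simpa [one_div] using this

lemma transfer_deriv (hk : 2 ≤ k) {η : ℝ → ℝ} (h : ContDiff ℝ 1 η) (x : ℝ) :
    deriv (transferOp k η) x
      = (1/(k:ℝ)) * ∑ i ∈ Finset.range k, (1/(k:ℝ)) * deriv η ((x + i)/k) :=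
  (transfer_hasDerivAt hk h x).deriv

lemma integral_comp_affine (hk : 2 ≤ k) (f : ℝ → ℝ) (i : ℕ) :
    ∫ x in (0:ℝ)..1, f ((x + i)/k) = (k:ℝ) * ∫ x in ((i:ℝ)/k)..(((i:ℝ)+1)/k), f x := by
  have hk0 : (k:ℝ) ≠ 0 := by positivity
  rw [intervalIntegral.integral_comp_add_right (fun y => f (y / k)) (i:ℝ)]
  rw [intervalIntegral.integral_comp_div f hk0]
  rw [zero_add, add_comm (1:ℝ) (i:ℝ)]
  simp [smul_eq_mul]

lemma sum_adjacent (hk : 2 ≤ k) {f : ℝ → ℝ} (hf : Continuous f) :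
    ∑ i ∈ Finset.range k, ∫ x in ((i:ℝ)/k)..(((i:ℝ)+1)/k), f x = ∫ x in (0:ℝ)..1, f x := by
  have hk0 : (k:ℝ) ≠ 0 := by positivity
  have := intervalIntegral.sum_integral_adjacent_intervals
    (a := fun i : ℕ => (i:ℝ)/k) (n := k) (f := f) (μ := volume)
    (fun i _ => hf.intervalIntegrable _ _)
  simp only [Nat.cast_zero, zero_div, Nat.cast_add, Nat.cast_one] at this
  rw [div_self hk0] at this
  exact this

lemma transfer_integral (hk : 2 ≤ k) {f : ℝ → ℝ} (hf : Continuous f) :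
    ∫ x in (0:ℝ)..1, transferOp k f x = ∫ x in (0:ℝ)..1, f x := by
  have hk0 : (k:ℝ) ≠ 0 := by positivity
  unfold transferOp
  rw [intervalIntegral.integral_const_mul]
  rw [intervalIntegral.integral_finset_sum (f := fun (i : ℕ) (x : ℝ) => f ((x + (i:ℝ))/k)) (fun i _ =>
    ((by fun_prop : Continuous fun x : ℝ => f ((x + i)/k)).intervalIntegrable _ _))]
  have : ∀ i ∈ Finset.range k, (∫ x in (0:ℝ)..1, f ((x + i)/k))
      = (k:ℝ) * ∫ x in ((i:ℝ)/k)..(((i:ℝ)+1)/k), f x := fun i _ => integral_comp_affine hk f i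
  rw [Finset.sum_congr rfl this, ← Finset.mul_sum, ← mul_assoc]
  rw [one_div, inv_mul_cancel₀ hk0, one_mul]
  exact sum_adjacent hk hf
end transfer2

section contraction
variable {k : ℕ}

lemma transfer_nonneg (hk : 2 ≤ k) {η : ℝ → ℝ} (h : ∀ x, 0 ≤ η x) (x : ℝ) :
    0 ≤ transferOp k η x := by
  unfold transferOp
  have : (0:ℝ) ≤ 1 / (k:ℝ) := by positivity
  exact mul_nonneg this (Finset.sum_nonneg fun i _ => h _)

lemma transfer_deriv_L1 (hk : 2 ≤ k) {η : ℝ → ℝ} (h : ContDiff ℝ 1 η) :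
    (∫ x in (0:ℝ)..1, |deriv (transferOp k η) x|)
      ≤ (1/(k:ℝ)) * ∫ x in (0:ℝ)..1, |deriv η x| := by
  have hk0 : (0:ℝ) < k := by positivity
  have hdc : Continuous (deriv η) := h.continuous_deriv le_rfl
  have habs : Continuous fun y => |deriv η y| := hdc.abs
  -- pointwise bound
  have hpt : ∀ x ∈ Set.Icc (0:ℝ) 1, |deriv (transferOp k η) x|
      ≤ (1/(k:ℝ)) * transferOp k (fun y => |deriv η y|) x := by
    intro x _
    rw [transfer_deriv hk h x]
    unfold transferOp
    rw [abs_mul, abs_of_nonneg (by positivity : (0:ℝ) ≤ 1/(k:ℝ))]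
    rw [← mul_assoc, mul_comm ((1:ℝ)/k) ((1:ℝ)/k), mul_assoc]
    refine mul_le_mul_of_nonneg_left ?_ (by positivity)
    calc |∑ i ∈ Finset.range k, (1/(k:ℝ)) * deriv η ((x + i)/k)|
        ≤ ∑ i ∈ Finset.range k, |(1/(k:ℝ)) * deriv η ((x + i)/k)| :=
          Finset.abs_sum_le_sum_abs _ _
      _ = (1/(k:ℝ)) * ∑ i ∈ Finset.range k, |deriv η ((x + i)/k)| := by
          rw [Finset.mul_sum]
          exact Finset.sum_congr rfl fun i _ => by
            rw [abs_mul, abs_of_nonneg (by positivity : (0:ℝ) ≤ 1/(k:ℝ))]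
  have hcont1 : Continuous fun x => |deriv (transferOp k η) x| :=
    ((transfer_contDiff hk h).continuous_deriv le_rfl).abs
  have hcont2 : Continuous fun x => (1/(k:ℝ)) * transferOp k (fun y => |deriv η y|) x := by
    unfold transferOp; fun_prop
  calc (∫ x in (0:ℝ)..1, |deriv (transferOp k η) x|)
      ≤ ∫ x in (0:ℝ)..1, (1/(k:ℝ)) * transferOp k (fun y => |deriv η y|) x :=
        intervalIntegral.integral_mono_on zero_le_one
          (hcont1.intervalIntegrable _ _) (hcont2.intervalIntegrable _ _) hpt
    _ = (1/(k:ℝ)) * ∫ x in (0:ℝ)..1, transferOp k (fun y => |deriv η y|) x :=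
        intervalIntegral.integral_const_mul _ _
    _ = (1/(k:ℝ)) * ∫ x in (0:ℝ)..1, |deriv η x| := by
        rw [transfer_integral hk habs]
end contraction

section poincare

lemma no_zero_pos_contra {f : ℝ → ℝ} (hfc : Continuous f)
    (hne : ∀ x ∈ Set.Icc (0:ℝ) 1, f x ≠ 0) (hpos : 0 < f 0)
    (hint : (∫ x in (0:ℝ)..1, f x) = 0) : False := by
  have hall : ∀ x ∈ Set.Ioo (0:ℝ) 1, 0 < f x := by
    intro y hy
    by_contra hle
    push_neg at hle
    have hylt : f y < 0 :=
      lt_of_le_of_ne hle (hne y ⟨le_of_lt hy.1, le_of_lt hy.2⟩)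
    have hsub : Set.Icc (f y) (f 0) ⊆ f '' Set.Icc 0 y :=
      intermediate_value_Icc' (le_of_lt hy.1) hfc.continuousOn
    obtain ⟨z, hz, hz0⟩ := hsub ⟨le_of_lt hylt, le_of_lt hpos⟩
    exact hne z ⟨hz.1, hz.2.trans (le_of_lt hy.2)⟩ hz0
  have := intervalIntegral.intervalIntegral_pos_of_pos_on
    (hfc.intervalIntegrable _ _) hall one_pos
  rw [hint] at this
  exact lt_irrefl _ this

lemma exists_eq_one {η : ℝ → ℝ} (hc : Continuous η)
    (hint : (∫ x in (0:ℝ)..1, η x) = 1) :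
    ∃ x₀ ∈ Set.Icc (0:ℝ) 1, η x₀ = 1 := by
  by_contra hno
  push_neg at hno
  set f : ℝ → ℝ := fun x => η x - 1 with hf
  have hfc : Continuous f := hc.sub continuous_const
  have hfint : (∫ x in (0:ℝ)..1, f x) = 0 := by
    rw [hf]
    rw [intervalIntegral.integral_sub (hc.intervalIntegrable _ _) intervalIntegrable_const]
    simp [hint]
  have hne : ∀ x ∈ Set.Icc (0:ℝ) 1, f x ≠ 0 := fun x hx h0 =>
    hno x hx (by have := sub_eq_zero.mp h0; simpa using this)
  rcases lt_or_gt_of_ne (hne 0 ⟨le_refl 0, zero_le_one⟩) with hneg | hpos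
  · refine no_zero_pos_contra (f := fun x => -f x) (by fun_prop)
      (fun x hx h0 => hne x hx (by simpa using h0)) (by simpa using hneg) ?_
    rw [intervalIntegral.integral_neg, hfint, neg_zero]
  · exact no_zero_pos_contra hfc hne hpos hfint

lemma poincare {η : ℝ → ℝ} (h : ContDiff ℝ 1 η) (hper : Function.Periodic η 1)
    (hint : (∫ x in (0:ℝ)..1, η x) = 1) :
    (∫ x in (0:ℝ)..1, |η x - 1|) ≤ ∫ x in (0:ℝ)..1, |deriv η x| := by
  obtain ⟨x₀, hx₀, hval⟩ := exists_eq_one h.continuous hint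
  set C := ∫ x in (0:ℝ)..1, |deriv η x| with hC
  have hdc : Continuous (deriv η) := h.continuous_deriv le_rfl
  have hCper : Function.Periodic (fun x => |deriv η x|) 1 := fun x => by
    simp [periodic_deriv' hper x]
  have hpt : ∀ x ∈ Set.Icc x₀ (x₀+1), |η x - 1| ≤ C := by
    intro x hx
    have hftc : ∫ t in x₀..x, deriv η t = η x - η x₀ :=
      intervalIntegral.integral_deriv_eq_sub
        (fun t _ => (h.differentiable one_ne_zero t)) (hdc.intervalIntegrable _ _)
    rw [← hval, ← hftc]
    calc |∫ t in x₀..x, deriv η t| ≤ ∫ t in x₀..x, |deriv η t| :=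
          intervalIntegral.abs_integral_le_integral_abs hx.1
      _ ≤ ∫ t in x₀..(x₀+1), |deriv η t| :=
          intervalIntegral.integral_mono_interval le_rfl hx.1 hx.2
            (Filter.Eventually.of_forall fun t => abs_nonneg _)
            (hdc.abs.intervalIntegrable _ _)
      _ = C := periodic_int hCper x₀
  have habsper : Function.Periodic (fun x => |η x - 1|) 1 := fun x => by
    simp [hper x]
  calc (∫ x in (0:ℝ)..1, |η x - 1|) = ∫ x in x₀..(x₀+1), |η x - 1| :=
        (periodic_int habsper x₀).symm
    _ ≤ ∫ x in x₀..(x₀+1), C :=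
        intervalIntegral.integral_mono_on (by linarith)
          ((h.continuous.sub continuous_const).abs.intervalIntegrable _ _)
          intervalIntegrable_const hpt
    _ = C := by simp

end poincare

lemma step_lemma {k : ℕ} (hk : 2 ≤ k) (δ : ℝ) (H : ℝ → ℝ) {η : ℝ → ℝ}
    (h1 : ContDiff ℝ 1 η) (h2 : Function.Periodic η 1) (h3 : ∀ x, 0 ≤ η x)
    (h4 : (∫ x in (0:ℝ)..1, η x) = 1) :
    ContDiff ℝ 1 (selfConsistentOp k δ H η) ∧
    Function.Periodic (selfConsistentOp k δ H η) 1 ∧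
    (∀ x, 0 ≤ selfConsistentOp k δ H η x) ∧
    (∫ x in (0:ℝ)..1, selfConsistentOp k δ H η x) = 1 ∧
    (∫ x in (0:ℝ)..1, |deriv (selfConsistentOp k δ H η) x|)
      ≤ (1/(k:ℝ)) * ∫ x in (0:ℝ)..1, |deriv η x| := by
  set c := δ * ∫ y in (0:ℝ)..1, H y * η y with hc
  set τ := translateOp c η with hτ
  have t1 : ContDiff ℝ 1 τ := translate_contDiff h1 c
  have t2 : Function.Periodic τ 1 := translate_periodic h2 c
  have t3 : ∀ x, 0 ≤ τ x := fun x => h3 _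
  have t4 : (∫ x in (0:ℝ)..1, τ x) = 1 := by
    rw [hτ]
    simp only [translateOp]
    rw [integral_translate h2 c]
    exact h4
  have t5 : (∫ x in (0:ℝ)..1, |deriv τ x|) = ∫ x in (0:ℝ)..1, |deriv η x| := by
    rw [intervalIntegral.integral_congr
      (g := fun x => |deriv η (x - c)|) (fun x _ => by rw [translate_deriv])]
    exact integral_translate (f := fun y => |deriv η y|)
      (fun x => by simp only []; rw [periodic_deriv' h2 x]) c
  have hL : selfConsistentOp k δ H η = transferOp k τ := rfl
  refine ⟨?_, ?_, ?_, ?_, ?_⟩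
  · rw [hL]; exact transfer_contDiff hk t1
  · rw [hL]; exact transfer_periodic hk t2
  · rw [hL]; exact fun x => transfer_nonneg hk t3 x
  · rw [hL, transfer_integral hk t1.continuous, t4]
  · rw [hL]
    calc (∫ x in (0:ℝ)..1, |deriv (transferOp k τ) x|)
        ≤ (1/(k:ℝ)) * ∫ x in (0:ℝ)..1, |deriv τ x| := transfer_deriv_L1 hk t1
      _ = (1/(k:ℝ)) * ∫ x in (0:ℝ)..1, |deriv η x| := by rw [t5]


/-- Let `k ≥ 2`, `δ ≥ 0` and `H` continuous `1`-periodic.  Then the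
constant density `1` is a fixed point of `𝓛_δ`, and every `C¹` `1`-periodic probability
density `η` converges to `1` exponentially fast in `W^{1,1}`, for any coupling strength:
`∫₀¹ |(𝓛_δⁿη)'| ≤ k⁻ⁿ ∫₀¹ |η'|` and `∫₀¹ |𝓛_δⁿη − 1| + ∫₀¹ |(𝓛_δⁿη)'| ≤ 2 k⁻ⁿ ∫₀¹ |η'|`. -/
theorem deterministic_coupling_convergence_to_equilibrium
    (k : ℕ) (hk : 2 ≤ k) (δ : ℝ) (hδ : 0 ≤ δ)
    (H : ℝ → ℝ) (hHc : Continuous H) (hHper : Function.Periodic H 1) :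
    selfConsistentOp k δ H (fun _ => 1) = (fun _ => 1)
    ∧ ∀ η : ℝ → ℝ, ContDiff ℝ 1 η → Function.Periodic η 1 → (∀ x, 0 ≤ η x) →
        (∫ x in (0:ℝ)..1, η x) = 1 →
        ∀ n : ℕ,
          ContDiff ℝ 1 ((selfConsistentOp k δ H)^[n] η)
          ∧ Function.Periodic ((selfConsistentOp k δ H)^[n] η) 1
          ∧ (∀ x, 0 ≤ (selfConsistentOp k δ H)^[n] η x)
          ∧ (∫ x in (0:ℝ)..1, (selfConsistentOp k δ H)^[n] η x) = 1
          ∧ (∫ x in (0:ℝ)..1, |deriv ((selfConsistentOp k δ H)^[n] η) x|) ≤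
              ((k : ℝ) ^ n)⁻¹ * ∫ x in (0:ℝ)..1, |deriv η x|
          ∧ (∫ x in (0:ℝ)..1, |(selfConsistentOp k δ H)^[n] η x - 1|)
              + (∫ x in (0:ℝ)..1, |deriv ((selfConsistentOp k δ H)^[n] η) x|) ≤
              2 * ((k : ℝ) ^ n)⁻¹ * ∫ x in (0:ℝ)..1, |deriv η x| := by
  have hk0 : (0:ℝ) < k := by positivity
  constructor
  · funext x
    simp only [selfConsistentOp, transferOp, translateOp, Finset.sum_const,
      Finset.card_range, nsmul_eq_mul, mul_one]
    field_simp
  · intro η h1 h2 h3 h4 n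
    have key : ∀ m : ℕ,
        ContDiff ℝ 1 ((selfConsistentOp k δ H)^[m] η)
        ∧ Function.Periodic ((selfConsistentOp k δ H)^[m] η) 1
        ∧ (∀ x, 0 ≤ (selfConsistentOp k δ H)^[m] η x)
        ∧ (∫ x in (0:ℝ)..1, (selfConsistentOp k δ H)^[m] η x) = 1
        ∧ (∫ x in (0:ℝ)..1, |deriv ((selfConsistentOp k δ H)^[m] η) x|) ≤
            ((k : ℝ) ^ m)⁻¹ * ∫ x in (0:ℝ)..1, |deriv η x| := by
      intro m
      induction m with
      | zero => exact ⟨h1, h2, h3, h4, by simp⟩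
      | succ m ih =>
        obtain ⟨i1, i2, i3, i4, i5⟩ := ih
        rw [Function.iterate_succ_apply']
        obtain ⟨s1, s2, s3, s4, s5⟩ := step_lemma hk δ H i1 i2 i3 i4
        refine ⟨s1, s2, s3, s4, ?_⟩
        calc (∫ x in (0:ℝ)..1, |deriv (selfConsistentOp k δ H ((selfConsistentOp k δ H)^[m] η)) x|)
            ≤ (1/(k:ℝ)) * ∫ x in (0:ℝ)..1, |deriv ((selfConsistentOp k δ H)^[m] η) x| := s5
          _ ≤ (1/(k:ℝ)) * (((k : ℝ) ^ m)⁻¹ * ∫ x in (0:ℝ)..1, |deriv η x|) :=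
              mul_le_mul_of_nonneg_left i5 (by positivity)
          _ = ((k : ℝ) ^ (m+1))⁻¹ * ∫ x in (0:ℝ)..1, |deriv η x| := by
              rw [pow_succ, mul_inv]; ring
    obtain ⟨c1, c2, c3, c4, c5⟩ := key n
    refine ⟨c1, c2, c3, c4, c5, ?_⟩
    have hpoin := poincare c1 c2 c4
    linarith
end
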